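/- arXiv:2308.08798 — 4 statements merged into one kernel-verified Lean document; each statement's English description precedes it below -/
import Mathlib

section
/- If two cycles in the m × n grid graph have the same signature and contain exactly the same edges of the bottom row of the grid (edges joining (i,1) to (i+1,1)), then the two cycles are equal. -/
namespace Slitherlink

/-- Vertices of grids: integer points of the plane. -/
abbrev V : Type := ℤ × ℤ

/-- Edges: unordered pairs of vertices. -/
abbrev Edge : Type := Sym2 V

/-- `p` is a vertex of the `m × n` grid. -/
def gridVertex (m n : ℤ) (p : V) : Prop :=
  1 ≤ p.1 ∧ p.1 ≤ m ∧ 1 ≤ p.2 ∧ p.2 ≤ n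

/-- `e` is an edge of the `m × n` grid: a unit segment between grid vertices. -/
def gridEdge (m n : ℤ) (e : Edge) : Prop :=
  ∃ p q : V, e = s(p, q) ∧ gridVertex m n p ∧ gridVertex m n q ∧
    ((q.1 = p.1 + 1 ∧ q.2 = p.2) ∨ (q.1 = p.1 ∧ q.2 = p.2 + 1))

/-- The four boundary edges of the unit cell with lower-left corner `(a, b)`. -/
def cellEdges (a b : ℤ) : Set Edge :=
  {s((a, b), (a + 1, b)), s((a, b), (a, b + 1)),
   s((a + 1, b), (a + 1, b + 1)), s((a, b + 1), (a + 1, b + 1))}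

/-- `(a, b)` is the lower-left corner of a cell of the `m × n` grid. -/
def isCell (m n a b : ℤ) : Prop := 1 ≤ a ∧ a + 1 ≤ m ∧ 1 ≤ b ∧ b + 1 ≤ n

/-- Number of edges of `E` incident with the vertex `p`. -/
noncomputable def degree (E : Set Edge) (p : V) : ℕ := {e ∈ E | p ∈ e}.ncard

/-- Number of edges of `E` among the four boundary edges of the cell at `(a, b)`. -/
noncomputable def cellCount (E : Set Edge) (a b : ℤ) : ℕ := (E ∩ cellEdges a b).ncard

/-- A set of edges of the `m × n` grid is totally even if every vertex is incident with an
even number of its edges and every cell contains an even number of its edges. -/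
def TotallyEven (m n : ℤ) (E : Set Edge) : Prop :=
  (∀ e ∈ E, gridEdge m n e) ∧
  (∀ p : V, Even (degree E p)) ∧
  (∀ a b : ℤ, isCell m n a b → Even (cellCount E a b))

/-- The graph on `V` whose edges are the members of `C`. -/
def cycleGraph (C : Set Edge) : SimpleGraph V where
  Adj p q := p ≠ q ∧ s(p, q) ∈ C
  symm := by
    constructor
    intro p q h
    refine ⟨h.1.symm, ?_⟩
    rw [Sym2.eq_swap]
    exact h.2
  loopless := by constructor; intro p h; exact h.1 rfl

/-- `C` is a cycle in the `m × n` grid: a nonempty connected 2-regular subgraph. -/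
def IsCycle (m n : ℤ) (C : Set Edge) : Prop :=
  C.Nonempty ∧ (∀ e ∈ C, gridEdge m n e) ∧
  (∀ p : V, degree C p = 0 ∨ degree C p = 2) ∧
  (∀ p q : V, (∃ e ∈ C, p ∈ e) → (∃ e ∈ C, q ∈ e) → (cycleGraph C).Reachable p q)

/-- Two edge sets have the same signature on the `m × n` grid. -/
def SameSignature (m n : ℤ) (C₁ C₂ : Set Edge) : Prop :=
  ∀ a b : ℤ, isCell m n a b → cellCount C₁ a b = cellCount C₂ a b

/-- Membership in the closed diamond `D(i)` of the `n × n` grid. -/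
def inDiamond (n i : ℤ) (p : V) : Prop :=
  i + 1 ≤ p.1 + p.2 ∧ p.1 + p.2 ≤ 2 * n - i + 1 ∧ -i ≤ p.1 - p.2 ∧ p.1 - p.2 ≤ i

/-- The diamond edge set `B(i)`: all edges of the `n × n` grid contained in `D(i)`. -/
def diamondSet (n i : ℤ) : Set Edge :=
  {e | gridEdge n n e ∧ ∀ p ∈ e, inDiamond n i p}

/-- The symmetric difference of two edge sets. -/
def sdiff (A B : Set Edge) : Set Edge := (A \ B) ∪ (B \ A)


section Aux

/-- Every point of a grid edge is a grid vertex. -/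
lemma mem_vertex_of_gridEdge {m n : ℤ} {e : Edge} (h : gridEdge m n e) {p : V} (hp : p ∈ e) :
    gridVertex m n p := by
  obtain ⟨a, b, rfl, ha, hb, -⟩ := h
  rcases Sym2.mem_iff.1 hp with rfl | rfl <;> assumption

/-- A grid edge containing `p` is one of the four unit edges at `p`. -/
lemma incident_cases {m n : ℤ} {e : Edge} {p : V} (h : gridEdge m n e) (hp : p ∈ e) :
    e = s(((p.1 - 1, p.2) : V), p) ∨ e = s(p, ((p.1 + 1, p.2) : V)) ∨
    e = s(((p.1, p.2 - 1) : V), p) ∨ e = s(p, ((p.1, p.2 + 1) : V)) := by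
  obtain ⟨a, b, rfl, -, -, hrel⟩ := h
  rcases Sym2.mem_iff.1 hp with rfl | rfl
  · rcases hrel with ⟨h1, h2⟩ | ⟨h1, h2⟩
    · right; left
      rw [show b = ((p.1 + 1, p.2) : V) from Prod.ext h1 h2]
    · right; right; right
      rw [show b = ((p.1, p.2 + 1) : V) from Prod.ext h1 h2]
  · rcases hrel with ⟨h1, h2⟩ | ⟨h1, h2⟩
    · left
      rw [show a = ((p.1 - 1, p.2) : V) from
        Prod.ext (show a.1 = p.1 - 1 by omega) (show a.2 = p.2 by omega)]
    · right; right; left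
      rw [show a = ((p.1, p.2 - 1) : V) from
        Prod.ext (show a.1 = p.1 by omega) (show a.2 = p.2 - 1 by omega)]

lemma subset_singleton_even {α : Type*} {T : Set α} {a : α} (h : T ⊆ {a})
    (he : Even T.ncard) : T = ∅ := by
  rcases Set.subset_singleton_iff_eq.1 h with h' | h'
  · exact h'
  · exfalso; rw [h', Set.ncard_singleton] at he; simp at he

lemma even_symmDiff_ncard {α : Type*} {A B : Set α} (hA : A.Finite) (hB : B.Finite)
    (h : Even (A.ncard + B.ncard)) : Even ((A \ B ∪ B \ A).ncard) := by
  have hd : Disjoint (A \ B) (B \ A) := by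
    rw [Set.disjoint_iff_inter_eq_empty]
    ext x; simp; tauto
  rw [Set.ncard_union_eq hd hA.diff hB.diff]
  have hab : (A ∩ B).Finite := hA.inter_of_left _
  have h1 : (A \ B).ncard = A.ncard - (A ∩ B).ncard := by
    rw [← Set.diff_self_inter, Set.ncard_diff Set.inter_subset_left hab]
  have h2 : (B \ A).ncard = B.ncard - (A ∩ B).ncard := by
    rw [← Set.diff_inter_self_eq_diff, Set.ncard_diff Set.inter_subset_right hab]
  have hca : (A ∩ B).ncard ≤ A.ncard := Set.ncard_le_ncard Set.inter_subset_left hA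
  have hcb : (A ∩ B).ncard ≤ B.ncard := Set.ncard_le_ncard Set.inter_subset_right hB
  obtain ⟨t, ht⟩ := h
  exact ⟨t - (A ∩ B).ncard, by omega⟩

/-- The set of edges of `E` at a vertex `p`, as a subset of the four unit edges. -/
lemma incident_subset {m n : ℤ} {E : Set Edge} (hgE : ∀ e ∈ E, gridEdge m n e) (p : V) :
    {e ∈ E | p ∈ e} ⊆
      ({s(((p.1 - 1, p.2) : V), p), s(p, ((p.1 + 1, p.2) : V)),
        s(((p.1, p.2 - 1) : V), p), s(p, ((p.1, p.2 + 1) : V))} : Set Edge) := by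
  rintro e ⟨he, hpe⟩
  rcases incident_cases (hgE e he) hpe with h | h | h | h <;> simp [h]

lemma incident_finite {m n : ℤ} {E : Set Edge} (hgE : ∀ e ∈ E, gridEdge m n e) (p : V) :
    {e ∈ E | p ∈ e}.Finite :=
  Set.Finite.subset (by
    exact (Set.finite_singleton _).insert _ |>.insert _ |>.insert _) (incident_subset hgE p)

/-- Key vertex elimination: if the three other unit edges at `p` are not in `E`,
then neither is the upward edge. -/
lemma vertex_elim {m n : ℤ} {E : Set Edge} (hgE : ∀ e ∈ E, gridEdge m n e) {p : V}
    (hdeg : Even (degree E p))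
    (h1 : s(((p.1 - 1, p.2) : V), p) ∉ E) (h2 : s(p, ((p.1 + 1, p.2) : V)) ∉ E)
    (h3 : s(((p.1, p.2 - 1) : V), p) ∉ E) :
    s(p, ((p.1, p.2 + 1) : V)) ∉ E := by
  intro hmem
  have hsub : {e ∈ E | p ∈ e} ⊆ {s(p, ((p.1, p.2 + 1) : V))} := by
    rintro e ⟨he, hpe⟩
    rcases incident_cases (hgE e he) hpe with h | h | h | h
    · exact absurd (h ▸ he) h1
    · exact absurd (h ▸ he) h2
    · exact absurd (h ▸ he) h3
    · simp [h]
  have := subset_singleton_even hsub hdeg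
  have : s(p, ((p.1, p.2 + 1) : V)) ∈ ({e ∈ E | p ∈ e} : Set Edge) :=
    ⟨hmem, Sym2.mem_mk_left _ _⟩
  simp_all

/-- Key cell elimination: if the three other edges of the cell at `(a,b)` are not in `E`,
then neither is the top edge. -/
lemma cell_elim {a b : ℤ} {E : Set Edge} (hc : Even (cellCount E a b))
    (h1 : s(((a, b) : V), ((a + 1, b) : V)) ∉ E) (h2 : s(((a, b) : V), ((a, b + 1) : V)) ∉ E)
    (h3 : s(((a + 1, b) : V), ((a + 1, b + 1) : V)) ∉ E) :
    s(((a, b + 1) : V), ((a + 1, b + 1) : V)) ∉ E := by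
  intro hmem
  have hsub : E ∩ cellEdges a b ⊆ {s(((a, b + 1) : V), ((a + 1, b + 1) : V))} := by
    rintro e ⟨he, hce⟩
    rcases hce with h | h | h | h
    · exact absurd (h ▸ he) h1
    · exact absurd (h ▸ he) h2
    · exact absurd (h ▸ he) h3
    · simp [h]
  have := subset_singleton_even hsub hc
  have : s(((a, b + 1) : V), ((a + 1, b + 1) : V)) ∈ E ∩ cellEdges a b :=
    ⟨hmem, by right; right; right; rfl⟩
  simp_all

end Aux

theorem stmt9 (m n : ℤ) (C₁ C₂ : Set Edge) (h₁ : IsCycle m n C₁) (h₂ : IsCycle m n C₂)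
    (hs : SameSignature m n C₁ C₂)
    (hagree : ∀ i : ℤ,
      (s((i, (1 : ℤ)), (i + 1, (1 : ℤ))) ∈ C₁ ↔ s((i, (1 : ℤ)), (i + 1, (1 : ℤ))) ∈ C₂)) :
    C₁ = C₂ := by
  classical
  obtain ⟨-, hg₁, hd₁, -⟩ := h₁
  obtain ⟨-, hg₂, hd₂, -⟩ := h₂
  set E : Set Edge := sdiff C₁ C₂ with hEdef
  have hmemE : ∀ e : Edge, e ∈ E ↔ (e ∈ C₁ ∧ e ∉ C₂) ∨ (e ∈ C₂ ∧ e ∉ C₁) := fun e => Iff.rfl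
  have hgE : ∀ e ∈ E, gridEdge m n e := by
    intro e he
    rcases (hmemE e).1 he with ⟨h, -⟩ | ⟨h, -⟩
    exacts [hg₁ e h, hg₂ e h]
  have hdeg : ∀ p : V, Even (degree E p) := by
    intro p
    have hset : {e ∈ E | p ∈ e} =
        ({e ∈ C₁ | p ∈ e} \ {e ∈ C₂ | p ∈ e}) ∪ ({e ∈ C₂ | p ∈ e} \ {e ∈ C₁ | p ∈ e}) := by
      ext e
      simp only [Set.mem_setOf_eq, Set.mem_union, Set.mem_diff, hmemE e]
      tauto
    show Even {e ∈ E | p ∈ e}.ncard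
    rw [hset]
    apply even_symmDiff_ncard (incident_finite hg₁ p) (incident_finite hg₂ p)
    have e1 : Even (degree C₁ p) := by rcases hd₁ p with h | h <;> simp [h]
    have e2 : Even (degree C₂ p) := by rcases hd₂ p with h | h <;> simp [h]
    exact e1.add e2
  have hcellE : ∀ a b : ℤ, isCell m n a b → Even (cellCount E a b) := by
    intro a b hc
    have hfin : (cellEdges a b).Finite :=
      (Set.finite_singleton _).insert _ |>.insert _ |>.insert _
    have hset : E ∩ cellEdges a b =
        ((C₁ ∩ cellEdges a b) \ (C₂ ∩ cellEdges a b)) ∪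
        ((C₂ ∩ cellEdges a b) \ (C₁ ∩ cellEdges a b)) := by
      ext e
      simp only [Set.mem_inter_iff, Set.mem_union, Set.mem_diff, hmemE e]
      tauto
    show Even (E ∩ cellEdges a b).ncard
    rw [hset]
    apply even_symmDiff_ncard (hfin.inter_of_right _) (hfin.inter_of_right _)
    rw [show (C₁ ∩ cellEdges a b).ncard = cellCount C₁ a b from rfl,
        show (C₂ ∩ cellEdges a b).ncard = cellCount C₂ a b from rfl, hs a b hc]
    exact Even.add_self _
  have hnotgrid : ∀ e : Edge, ¬ gridEdge m n e → e ∉ E := fun e h he => h (hgE e he)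
  have hbot : ∀ i : ℤ, s(((i, (1:ℤ)) : V), ((i + 1, (1:ℤ)) : V)) ∉ E := by
    intro i hmem
    rcases (hmemE _).1 hmem with ⟨h, h'⟩ | ⟨h, h'⟩
    · exact h' ((hagree i).1 h)
    · exact h' ((hagree i).2 h)
  have key : ∀ k : ℕ, ∀ i : ℤ,
      s(((i, 1 + (k:ℤ)) : V), ((i + 1, 1 + (k:ℤ)) : V)) ∉ E ∧
      s(((i, 1 + (k:ℤ)) : V), ((i, 1 + (k:ℤ) + 1) : V)) ∉ E := by
    intro k
    induction k with
    | zero =>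
      intro i
      simp only [Nat.cast_zero, add_zero]
      constructor
      · exact hbot i
      · refine vertex_elim hgE (hdeg (i, 1)) ?_ ?_ ?_
        · have := hbot (i - 1)
          rwa [show (i:ℤ) - 1 + 1 = i by ring] at this
        · exact hbot i
        · apply hnotgrid
          intro hg
          have hv := mem_vertex_of_gridEdge hg (Sym2.mem_mk_left _ _)
          simp only [gridVertex] at hv
          omega
    | succ k ih =>
      have hj : (1:ℤ) ≤ 1 + (k:ℤ) := by omega
      intro i
      rw [show (1:ℤ) + ((k:ℕ) + 1 : ℕ) = 1 + (k:ℤ) + 1 from by push_cast; ring]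
      have hH : ∀ i' : ℤ,
          s(((i', 1 + (k:ℤ) + 1) : V), ((i' + 1, 1 + (k:ℤ) + 1) : V)) ∉ E := by
        intro i'
        by_cases hcell : isCell m n i' (1 + (k:ℤ))
        · exact cell_elim (hcellE i' _ hcell) (ih i').1 (ih i').2 (ih (i' + 1)).2
        · apply hnotgrid
          intro hg
          have hv1 := mem_vertex_of_gridEdge hg (Sym2.mem_mk_left _ _)
          have hv2 := mem_vertex_of_gridEdge hg (Sym2.mem_mk_right _ _)
          simp only [gridVertex] at hv1 hv2
          simp only [isCell] at hcell
          omega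
      constructor
      · exact hH i
      · have h1 : s(((i - 1, 1 + (k:ℤ) + 1) : V), ((i, 1 + (k:ℤ) + 1) : V)) ∉ E := by
          have := hH (i - 1)
          rwa [show (i:ℤ) - 1 + 1 = i by ring] at this
        have h3 : s(((i, (1 + (k:ℤ) + 1) - 1) : V), ((i, 1 + (k:ℤ) + 1) : V)) ∉ E := by
          rw [show (1 + (k:ℤ) + 1) - 1 = 1 + (k:ℤ) by ring]
          exact (ih i).2
        exact vertex_elim hgE (hdeg (i, 1 + (k:ℤ) + 1)) h1 (hH i) h3
  have hEempty : ∀ e, e ∉ E := by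
    intro e he
    obtain ⟨p, q, hepq, hp, hq, hrel⟩ := hgE e he
    subst hepq
    obtain ⟨x, y⟩ := p
    obtain ⟨u, v⟩ := q
    simp only [gridVertex] at hp hq
    simp only [Prod.fst, Prod.snd] at hrel
    obtain ⟨k, hk⟩ : ∃ k : ℕ, y = 1 + (k:ℤ) := ⟨(y - 1).toNat, by omega⟩
    subst hk
    rcases hrel with ⟨hq1, hq2⟩ | ⟨hq1, hq2⟩
    · rw [show (u, v) = ((x + 1, 1 + (k:ℤ)) : V) from Prod.ext (by simpa using hq1)
        (by simpa using hq2)] at he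
      exact (key k x).1 he
    · rw [show (u, v) = ((x, 1 + (k:ℤ) + 1) : V) from Prod.ext (by simpa using hq1)
        (by simpa using hq2)] at he
      exact (key k x).2 he
  ext e
  constructor
  · intro h
    by_contra hc
    exact hEempty e ((hmemE e).2 (Or.inl ⟨h, hc⟩))
  · intro h
    by_contra hc
    exact hEempty e ((hmemE e).2 (Or.inr ⟨h, hc⟩))


end Slitherlink
end

section
/- Let C₁ and C₂ be two distinct cycles with the same signature on the m × n grid. Then the bottom row of the grid contains an edge belonging to both C₁ and C₂; that is, there exists 1 ≤ i < m such that the edge from (i,1) to (i+1,1) is in both cycles. -/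
namespace Slitherlink

lemma mem_grid_vertex {m n : ℤ} {e : Edge} {p : V} (he : gridEdge m n e) (hp : p ∈ e) :
    gridVertex m n p := by
  obtain ⟨a, b, rfl, ha, hb, -⟩ := he
  rcases Sym2.mem_iff.1 hp with rfl | rfl <;> assumption

lemma edge_cases {m n : ℤ} {e : Edge} {p : V} (he : gridEdge m n e) (hp : p ∈ e) :
    e = s(p, (p.1 + 1, p.2)) ∨ e = s((p.1 - 1, p.2), p) ∨
    e = s(p, (p.1, p.2 + 1)) ∨ e = s((p.1, p.2 - 1), p) := by
  obtain ⟨a, b, rfl, -, -, hab⟩ := he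
  rcases Sym2.mem_iff.1 hp with rfl | rfl
  · rcases hab with ⟨h1, h2⟩ | ⟨h1, h2⟩
    · exact Or.inl (by rw [show ((p.1 + 1, p.2) : V) = b from Prod.ext_iff.2 ⟨by omega, by omega⟩])
    · exact Or.inr (Or.inr (Or.inl (by
        rw [show ((p.1, p.2 + 1) : V) = b from Prod.ext_iff.2 ⟨by omega, by omega⟩])))
  · rcases hab with ⟨h1, h2⟩ | ⟨h1, h2⟩
    · exact Or.inr (Or.inl (by
        rw [show ((p.1 - 1, p.2) : V) = a from Prod.ext_iff.2 ⟨by omega, by omega⟩]))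
    · exact Or.inr (Or.inr (Or.inr (by
        rw [show ((p.1, p.2 - 1) : V) = a from Prod.ext_iff.2 ⟨by omega, by omega⟩])))

lemma finite4 {α : Type*} (a b c d : α) : ({a, b, c, d} : Set α).Finite :=
  (((Set.finite_singleton d).insert c).insert b).insert a

lemma incid_finite {m n : ℤ} {C : Set Edge} (hC : ∀ e ∈ C, gridEdge m n e) (p : V) :
    {e ∈ C | p ∈ e}.Finite := by
  apply (finite4 (s(p, (p.1 + 1, p.2))) (s((p.1 - 1, p.2), p)) (s(p, (p.1, p.2 + 1)))
    (s((p.1, p.2 - 1), p))).subset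
  rintro f ⟨hf, hpf⟩
  rcases edge_cases (hC f hf) hpf with h | h | h | h <;> simp [h]

lemma cellEdges_finite (a b : ℤ) : (cellEdges a b).Finite := finite4 _ _ _ _

lemma even_symmdiff_ncard {S₁ S₂ : Set Edge} (h₁ : S₁.Finite) (h₂ : S₂.Finite)
    (h : Even (S₁.ncard + S₂.ncard)) : Even (((S₁ \ S₂) ∪ (S₂ \ S₁)).ncard) := by
  have hd : Disjoint (S₁ \ S₂) (S₂ \ S₁) := by
    rw [Set.disjoint_left]; rintro x ⟨hx1, hx2⟩ ⟨hx3, hx4⟩; exact hx2 hx3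
  rw [Set.ncard_union_eq hd h₁.diff h₂.diff]
  have e1 := Set.ncard_inter_add_ncard_diff_eq_ncard S₁ S₂ h₁
  have e2 := Set.ncard_inter_add_ncard_diff_eq_ncard S₂ S₁ h₂
  rw [Set.inter_comm] at e2
  rw [Nat.even_iff] at *
  omega

lemma sdiff_degree_even {m n : ℤ} {C₁ C₂ : Set Edge}
    (hg₁ : ∀ e ∈ C₁, gridEdge m n e) (hg₂ : ∀ e ∈ C₂, gridEdge m n e)
    (hd₁ : ∀ p : V, degree C₁ p = 0 ∨ degree C₁ p = 2)
    (hd₂ : ∀ p : V, degree C₂ p = 0 ∨ degree C₂ p = 2) (p : V) :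
    Even (degree (sdiff C₁ C₂) p) := by
  have hset : {e ∈ sdiff C₁ C₂ | p ∈ e} =
      ({e ∈ C₁ | p ∈ e} \ {e ∈ C₂ | p ∈ e}) ∪ ({e ∈ C₂ | p ∈ e} \ {e ∈ C₁ | p ∈ e}) := by
    ext f; simp only [sdiff, Set.mem_union, Set.mem_diff, Set.mem_sep_iff, Set.mem_setOf_eq]; tauto
  rw [degree, hset]
  apply even_symmdiff_ncard (incid_finite hg₁ p) (incid_finite hg₂ p)
  have := hd₁ p; have := hd₂ p
  rw [degree] at *; rw [Nat.even_iff]; omega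

lemma sdiff_cell_even {m n a b : ℤ} {C₁ C₂ : Set Edge}
    (hs : SameSignature m n C₁ C₂) (hab : isCell m n a b) :
    Even (cellCount (sdiff C₁ C₂) a b) := by
  have hset : sdiff C₁ C₂ ∩ cellEdges a b =
      ((C₁ ∩ cellEdges a b) \ (C₂ ∩ cellEdges a b)) ∪
      ((C₂ ∩ cellEdges a b) \ (C₁ ∩ cellEdges a b)) := by
    ext f; simp only [sdiff, Set.mem_union, Set.mem_diff, Set.mem_inter_iff, Set.mem_setOf_eq]; tauto
  rw [cellCount, hset]
  apply even_symmdiff_ncard ((cellEdges_finite a b).inter_of_right _)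
    ((cellEdges_finite a b).inter_of_right _)
  have := hs a b hab
  rw [cellCount, cellCount] at this
  rw [this]
  exact Even.add_self _

/-- bottom horizontal edge -/
def bedge (i : ℤ) : Edge := s((i, (1 : ℤ)), (i + 1, (1 : ℤ)))
/-- bottom vertical edge -/
def vedge (i : ℤ) : Edge := s((i, (1 : ℤ)), (i, (2 : ℤ)))
/-- top edge of a bottom cell -/
def tedge (i : ℤ) : Edge := s((i, (2 : ℤ)), (i + 1, (2 : ℤ)))


lemma mem_bedge_left (i : ℤ) : ((i, (1 : ℤ)) : V) ∈ bedge i := by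
  simp [bedge]

lemma mem_bedge_right (i : ℤ) : ((i + 1, (1 : ℤ)) : V) ∈ bedge i := by
  simp [bedge]

lemma mem_vedge_left (i : ℤ) : ((i, (1 : ℤ)) : V) ∈ vedge i := by
  simp [vedge]

lemma incid_eq_singleton {C : Set Edge} {p : V} {y : Edge}
    (hsub : {e ∈ C | p ∈ e} ⊆ {y}) (hy : y ∈ C) (hpy : p ∈ y) : degree C p = 1 := by
  rw [degree, Set.Subset.antisymm hsub (Set.singleton_subset_iff.2 ⟨hy, hpy⟩),
    Set.ncard_singleton]

lemma deg_mem_other {C : Set Edge} {p : V} {x y : Edge}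
    (hdeg : degree C p = 0 ∨ degree C p = 2)
    (hsub : {e ∈ C | p ∈ e} ⊆ {x, y}) (hx : x ∈ C) (hpx : p ∈ x) : y ∈ C := by
  by_contra hyC
  have hsub' : {e ∈ C | p ∈ e} ⊆ {x} := by
    rintro f ⟨hf, hpf⟩
    rcases hsub ⟨hf, hpf⟩ with h | h
    · exact h
    · exact absurd (h ▸ hf) hyC
  have := incid_eq_singleton hsub' hx hpx
  omega

lemma incid_bottom {m n i : ℤ} {C : Set Edge} (hC : ∀ e ∈ C, gridEdge m n e) :
    {e ∈ C | ((i, (1 : ℤ)) : V) ∈ e} ⊆ {bedge (i - 1), bedge i, vedge i} := by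
  rintro f ⟨hf, hpf⟩
  rcases edge_cases (hC f hf) hpf with h | h | h | h
  · right; left
    rw [h, bedge]
  · left
    rw [h, bedge]
    congr 2 <;> norm_num
  · right; right
    rw [h, vedge]
    norm_num
  · exfalso
    have hv := mem_grid_vertex (hC f hf) (h ▸ Sym2.mem_mk_left _ _)
    simp [gridVertex] at hv

lemma cellEq (i : ℤ) : cellEdges i 1 = {bedge i, vedge i, vedge (i + 1), tedge i} := by
  norm_num [cellEdges, bedge, vedge, tedge]

lemma bedge_ne_vedge (i j : ℤ) : bedge i ≠ vedge j := by
  simp [bedge, vedge, Sym2.eq_iff, Prod.ext_iff]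

lemma vedge_ne_tedge (i j : ℤ) : vedge i ≠ tedge j := by
  simp [vedge, tedge, Sym2.eq_iff, Prod.ext_iff]

lemma vedge_inj (i j : ℤ) : vedge i = vedge j ↔ i = j := by
  simp [vedge, Sym2.eq_iff, Prod.ext_iff]

lemma step {m n i : ℤ} {C₁ C₂ : Set Edge} (h₁ : IsCycle m n C₁) (h₂ : IsCycle m n C₂)
    (hs : SameSignature m n C₁ C₂) (hb1 : bedge i ∈ C₁) (hb2 : bedge i ∉ C₂)
    (hl1 : bedge (i - 1) ∉ C₁) (hl2 : bedge (i - 1) ∉ C₂) :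
    bedge (i + 1) ∈ C₁ ∧ bedge (i + 1) ∈ C₂ := by
  obtain ⟨-, hg₁, hd₁, -⟩ := h₁
  obtain ⟨-, hg₂, hd₂, -⟩ := h₂
  -- incidence at p = (i,1)
  have hs1 : {e ∈ C₁ | ((i, (1 : ℤ)) : V) ∈ e} ⊆ {bedge i, vedge i} := by
    intro f hf
    rcases incid_bottom hg₁ hf with h | h | h
    · exact absurd (h ▸ hf.1) hl1
    · exact Or.inl h
    · exact Or.inr h
  have hv1 : vedge i ∈ C₁ := deg_mem_other (hd₁ _) hs1 hb1 (mem_bedge_left i)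
  have hv2 : vedge i ∉ C₂ := by
    intro hv
    have hs2 : {e ∈ C₂ | ((i, (1 : ℤ)) : V) ∈ e} ⊆ {vedge i} := by
      intro f hf
      rcases incid_bottom hg₂ hf with h | h | h
      · exact absurd (h ▸ hf.1) hl2
      · exact absurd (h ▸ hf.1) hb2
      · exact h
    have := incid_eq_singleton hs2 hv (mem_vedge_left i)
    have := hd₂ ((i, (1 : ℤ)) : V)
    omega
  -- grid bounds
  have gv1 := mem_grid_vertex (hg₁ _ hb1) (mem_bedge_left i)
  have gv2 := mem_grid_vertex (hg₁ _ hb1) (mem_bedge_right i)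
  have gv3 := mem_grid_vertex (hg₁ _ hv1) (by simp [vedge] : ((i, (2:ℤ)) : V) ∈ vedge i)
  simp [gridVertex] at gv1 gv2 gv3
  have hcell : isCell m n i 1 := ⟨by omega, by omega, by omega, by omega⟩
  -- cell count argument
  have fin1 : (C₁ ∩ cellEdges i 1).Finite := (cellEdges_finite i 1).inter_of_right _
  have fin2 : (C₂ ∩ cellEdges i 1).Finite := (cellEdges_finite i 1).inter_of_right _
  have hpair : ({bedge i, vedge i} : Set Edge) ⊆ C₁ ∩ cellEdges i 1 := by
    rintro f (rfl | rfl)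
    · exact ⟨hb1, by rw [cellEq]; simp⟩
    · exact ⟨hv1, by rw [cellEq]; simp⟩
  have hge : 2 ≤ (C₁ ∩ cellEdges i 1).ncard := by
    rw [← Set.ncard_pair (bedge_ne_vedge i i)]
    exact Set.ncard_le_ncard hpair fin1
  have hsub2 : C₂ ∩ cellEdges i 1 ⊆ {vedge (i + 1), tedge i} := by
    rintro f ⟨hf, hfc⟩
    rw [cellEq] at hfc
    rcases hfc with rfl | rfl | rfl | rfl
    · exact absurd hf hb2
    · exact absurd hf hv2
    · exact Or.inl rfl
    · exact Or.inr rfl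
  have hle : (C₂ ∩ cellEdges i 1).ncard ≤ 2 := by
    refine (Set.ncard_le_ncard hsub2 ((Set.finite_singleton _).insert _)).trans ?_
    exact (Set.ncard_insert_le _ _).trans (by simp)
  have hcc := hs i 1 hcell
  rw [cellCount, cellCount] at hcc
  have hc1 : (C₁ ∩ cellEdges i 1).ncard = 2 := by omega
  have hc2 : (C₂ ∩ cellEdges i 1).ncard = 2 := by omega
  have eq1 : ({bedge i, vedge i} : Set Edge) = C₁ ∩ cellEdges i 1 :=
    Set.eq_of_subset_of_ncard_le hpair (by rw [hc1, Set.ncard_pair (bedge_ne_vedge i i)]) fin1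
  have eq2 : C₂ ∩ cellEdges i 1 = {vedge (i + 1), tedge i} :=
    Set.eq_of_subset_of_ncard_le hsub2
      (by rw [hc2, Set.ncard_pair (vedge_ne_tedge (i + 1) i)]) ((Set.finite_singleton _).insert _)
  have hv3 : vedge (i + 1) ∉ C₁ := by
    intro h
    have hmem : vedge (i + 1) ∈ C₁ ∩ cellEdges i 1 := ⟨h, by rw [cellEq]; simp⟩
    rw [← eq1] at hmem
    rcases hmem with h' | h'
    · exact (bedge_ne_vedge i (i + 1)) h'.symm
    · rw [Set.mem_singleton_iff, vedge_inj] at h'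
      omega
  have hv4 : vedge (i + 1) ∈ C₂ := by
    have : vedge (i + 1) ∈ C₂ ∩ cellEdges i 1 := by rw [eq2]; simp
    exact this.1
  -- incidence at q = (i+1,1)
  have key : ∀ {C : Set Edge}, (∀ e ∈ C, gridEdge m n e) →
      {e ∈ C | ((i + 1, (1 : ℤ)) : V) ∈ e} ⊆ {bedge i, bedge (i + 1), vedge (i + 1)} := by
    intro C hC
    have := incid_bottom (i := i + 1) hC
    rwa [show i + 1 - 1 = i by ring] at this
  have hq1 : {e ∈ C₁ | ((i + 1, (1 : ℤ)) : V) ∈ e} ⊆ {bedge i, bedge (i + 1)} := by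
    intro f hf
    rcases key hg₁ hf with h | h | h
    · exact Or.inl h
    · exact Or.inr h
    · exact absurd (h ▸ hf.1) hv3
  have hq2 : {e ∈ C₂ | ((i + 1, (1 : ℤ)) : V) ∈ e} ⊆ {vedge (i + 1), bedge (i + 1)} := by
    intro f hf
    rcases key hg₂ hf with h | h | h
    · exact absurd (h ▸ hf.1) hb2
    · exact Or.inr h
    · exact Or.inl h
  exact ⟨deg_mem_other (hd₁ _) hq1 hb1 (mem_bedge_right i),
    deg_mem_other (hd₂ _) hq2 hv4 (mem_vedge_left (i + 1))⟩

lemma exists_bottom {m n : ℤ} {D : Set Edge} (hgrid : ∀ e ∈ D, gridEdge m n e)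
    (hdeg : ∀ p : V, Even (degree D p))
    (hcell : ∀ a b : ℤ, isCell m n a b → Even (cellCount D a b))
    (hne : D.Nonempty) : ∃ i : ℤ, bedge i ∈ D := by
  have hP : ∃ y : ℤ, ∃ e ∈ D, ∃ p ∈ e, Prod.snd p = y := by
    obtain ⟨e, he⟩ := hne
    obtain ⟨p, q, rfl, -, -, -⟩ := hgrid e he
    exact ⟨p.2, _, he, p, Sym2.mem_mk_left _ _, rfl⟩
  have hbdd : ∃ b : ℤ, ∀ y : ℤ, (∃ e ∈ D, ∃ p ∈ e, Prod.snd p = y) → b ≤ y := by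
    refine ⟨1, ?_⟩
    rintro y ⟨e, he, p, hp, rfl⟩
    exact (mem_grid_vertex (hgrid e he) hp).2.2.1
  obtain ⟨y₀, hy₀, hmin⟩ := Int.exists_least_of_bdd hbdd hP
  have hM : ∀ e ∈ D, ∀ p ∈ e, y₀ ≤ Prod.snd p := fun e he p hp => hmin _ ⟨e, he, p, hp, rfl⟩
  by_cases hH : ∃ a : ℤ, s(((a : ℤ), y₀), (a + 1, y₀)) ∈ D
  · obtain ⟨a, ha⟩ := hH
    have gv1 := mem_grid_vertex (hgrid _ ha) (Sym2.mem_mk_left _ _)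
    have gv2 := mem_grid_vertex (hgrid _ ha) (Sym2.mem_mk_right _ _)
    simp [gridVertex] at gv1 gv2
    by_cases h1 : y₀ = 1
    · subst h1; exact ⟨a, ha⟩
    · exfalso
      have hcl : isCell m n a (y₀ - 1) := ⟨by omega, by omega, by omega, by omega⟩
      have hone : D ∩ cellEdges a (y₀ - 1) = {s(((a : ℤ), y₀), (a + 1, y₀))} := by
        apply Set.Subset.antisymm
        · rintro f ⟨hf, hfc⟩
          simp only [cellEdges, Set.mem_insert_iff, Set.mem_singleton_iff] at hfc
          rcases hfc with rfl | rfl | rfl | rfl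
          · have := hM _ hf _ (Sym2.mem_mk_left _ _)
            simp at this
          · have := hM _ hf _ (Sym2.mem_mk_left _ _)
            simp at this
          · have := hM _ hf _ (Sym2.mem_mk_left _ _)
            simp at this
          · rw [Set.mem_singleton_iff, show y₀ - 1 + 1 = y₀ from by ring]
        · rw [Set.singleton_subset_iff]
          refine ⟨ha, ?_⟩
          simp only [cellEdges, Set.mem_insert_iff, Set.mem_singleton_iff]
          right; right; right
          rw [show y₀ - 1 + 1 = y₀ from by ring]
      have := hcell a (y₀ - 1) hcl
      rw [cellCount, hone, Set.ncard_singleton] at this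
      simp at this
  · push_neg at hH
    exfalso
    obtain ⟨e, he, p, hp, hpy⟩ := hy₀
    obtain ⟨a, b⟩ := p
    dsimp at hpy
    subst hpy
    have hvert : ∀ f ∈ D, ((a, b) : V) ∈ f → f = s(((a : ℤ), b), (a, b + 1)) := by
      intro f hf hpf
      rcases edge_cases (hgrid f hf) hpf with h' | h' | h' | h'
      · exact absurd (h' ▸ hf) (hH a)
      · exfalso
        apply hH (a - 1)
        rw [show (a : ℤ) - 1 + 1 = a from by ring]
        exact h' ▸ hf
      · exact h'
      · exfalso
        have := hM f hf _ (h' ▸ Sym2.mem_mk_left (((a, b) : V).1, ((a, b) : V).2 - 1) ((a, b) : V))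
        simp at this
    have hsing : {f ∈ D | ((a, b) : V) ∈ f} ⊆ {s(((a : ℤ), b), (a, b + 1))} := by
      rintro f ⟨hf, hpf⟩
      exact hvert f hf hpf
    have he' : s(((a : ℤ), b), (a, b + 1)) ∈ D := hvert e he hp ▸ he
    have hd1 := incid_eq_singleton hsing he' (Sym2.mem_mk_left _ _)
    have := hdeg ((a, b) : V)
    rw [hd1] at this
    simp at this

theorem stmt10 (m n : ℤ) (C₁ C₂ : Set Edge) (h₁ : IsCycle m n C₁) (h₂ : IsCycle m n C₂)
    (hne : C₁ ≠ C₂) (hs : SameSignature m n C₁ C₂) :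
    ∃ i : ℤ, 1 ≤ i ∧ i + 1 ≤ m ∧
      s((i, (1 : ℤ)), (i + 1, (1 : ℤ))) ∈ C₁ ∧ s((i, (1 : ℤ)), (i + 1, (1 : ℤ))) ∈ C₂ := by
  have hgD : ∀ e ∈ sdiff C₁ C₂, gridEdge m n e := by
    rintro e (⟨he, -⟩ | ⟨he, -⟩)
    exacts [h₁.2.1 e he, h₂.2.1 e he]
  have hdD : ∀ p : V, Even (degree (sdiff C₁ C₂) p) :=
    sdiff_degree_even h₁.2.1 h₂.2.1 h₁.2.2.1 h₂.2.2.1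
  have hcD : ∀ a b : ℤ, isCell m n a b → Even (cellCount (sdiff C₁ C₂) a b) :=
    fun a b hab => sdiff_cell_even hs hab
  have hneD : (sdiff C₁ C₂).Nonempty := by
    rcases Set.eq_empty_or_nonempty (sdiff C₁ C₂) with h | h
    · exfalso
      apply hne
      ext x
      have h1 : x ∉ sdiff C₁ C₂ := h ▸ Set.notMem_empty x
      simp only [sdiff, Set.mem_union, Set.mem_diff] at h1
      push_neg at h1
      constructor <;> intro hx
      · exact h1.1 hx
      · exact h1.2 hx
    · exact h
  obtain ⟨i₀, hi₀⟩ := exists_bottom hgD hdD hcD hneD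
  have hex : ∃ j : ℤ, bedge j ∈ C₁ ∨ bedge j ∈ C₂ := by
    refine ⟨i₀, ?_⟩
    rcases hi₀ with ⟨h, -⟩ | ⟨h, -⟩
    exacts [Or.inl h, Or.inr h]
  have hbdd : ∃ b : ℤ, ∀ j : ℤ, (bedge j ∈ C₁ ∨ bedge j ∈ C₂) → b ≤ j := by
    refine ⟨1, fun j hj => ?_⟩
    have hg : gridEdge m n (bedge j) := by
      rcases hj with h | h
      exacts [h₁.2.1 _ h, h₂.2.1 _ h]
    exact (mem_grid_vertex hg (mem_bedge_left j)).1
  obtain ⟨i, hi, hmin⟩ := Int.exists_least_of_bdd hbdd hex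
  have hone : (1 : ℤ) ≤ i := by
    obtain ⟨b, hb⟩ := hbdd
    have hg : gridEdge m n (bedge i) := by
      rcases hi with h | h
      exacts [h₁.2.1 _ h, h₂.2.1 _ h]
    exact (mem_grid_vertex hg (mem_bedge_left i)).1
  have hl1 : bedge (i - 1) ∉ C₁ := fun h => by have := hmin (i - 1) (Or.inl h); omega
  have hl2 : bedge (i - 1) ∉ C₂ := fun h => by have := hmin (i - 1) (Or.inr h); omega
  have bounds : ∀ (C : Set Edge), (∀ e ∈ C, gridEdge m n e) → ∀ j : ℤ, bedge j ∈ C →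
      1 ≤ j ∧ j + 1 ≤ m := by
    intro C hC j hj
    have g1 := mem_grid_vertex (hC _ hj) (mem_bedge_left j)
    have g2 := mem_grid_vertex (hC _ hj) (mem_bedge_right j)
    simp only [gridVertex] at g1 g2
    exact ⟨g1.1, g2.2.1⟩
  by_cases hc1 : bedge i ∈ C₁ <;> by_cases hc2 : bedge i ∈ C₂
  · exact ⟨i, (bounds C₁ h₁.2.1 i hc1).1, (bounds C₁ h₁.2.1 i hc1).2, hc1, hc2⟩
  · obtain ⟨k1, k2⟩ := step h₁ h₂ hs hc1 hc2 hl1 hl2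
    exact ⟨i + 1, by omega, (bounds C₁ h₁.2.1 (i + 1) k1).2, k1, k2⟩
  · have hs' : SameSignature m n C₂ C₁ := fun a b hab => (hs a b hab).symm
    obtain ⟨k2, k1⟩ := step h₂ h₁ hs' hc2 hc1 hl2 hl1
    exact ⟨i + 1, by omega, (bounds C₂ h₂.2.1 (i + 1) k2).2, k1, k2⟩
  · rcases hi with h | h
    exacts [absurd h hc1, absurd h hc2]


end Slitherlink
end

section
/- Let m ≡ 2 (mod 4) and n ≡ 2 (mod 4) be positive integers. There is no pseudocycle C (edge set in which every vertex has even degree 0 or 2, i.e., a disjoint union of cycles) in the m × n grid graph such that every cell (x,y) with x ≡ y ≡ 3/2 (mod 2) — i.e., every cell whose lower-left corner (a,b) satisfies a and b both odd — contains exactly 2 edges of C. In particular no single cycle satisfies this clue pattern. -/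
namespace Slitherlink

/-- A pseudocycle: a disjoint union of cycles, i.e. an edge set of the grid in which
every vertex has degree `0` or `2`. -/
def IsPseudocycle (m n : ℤ) (C : Set Edge) : Prop :=
  (∀ e ∈ C, gridEdge m n e) ∧ (∀ p : V, degree C p = 0 ∨ degree C p = 2)

-- ===================== auxiliary lemmas ======================

lemma z3 : ∀ x y z : ZMod 2, x = y + z → x + y = z := by decide
lemma z3b : ∀ x y z : ZMod 2, x = y + z → y = x + z := by decide
lemma z6 : ∀ c q1 q2 q3 q4 : ZMod 2, q1 + q2 + q3 + q4 = 0 →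
    (c + q1) + (c + q2) + (c + q3) + (c + q4) = 0 := by decide
lemma z8 : ∀ q1 q2 q3 q4 : ZMod 2, q4 + q2 + q1 + q3 = 2 → q1 + q2 + q3 + q4 = 0 := by decide
lemma zxx : ∀ x y : ZMod 2, x + x + (y + y) = 0 := by decide

lemma natcast_even (s : ℕ) (hs : s % 2 = 0) : (s : ZMod 2) = 0 := by
  rw [show s = 2 * (s / 2) by omega]
  push_cast
  rw [show (2 : ZMod 2) = 0 by decide]
  ring

lemma natcast_odd (s : ℕ) (hs : s % 2 = 1) : (s : ZMod 2) = 1 := by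
  rw [show s = 2 * (s / 2) + 1 by omega]
  push_cast
  rw [show (2 : ZMod 2) = 0 by decide]
  ring

lemma Emaster0 (A B G D c : ZMod 2) (hAB : A + B = c) (hGD : G + D = c) (hAG : A + G = c)
    (hBD : B + D = c) :
    (A * B + A + B) + (G * D + G + D) + A * G + B * D = 0 := by
  revert A B G D c; decide

lemma Emaster (A B G D c : ZMod 2) (nN nS nE nW : ℕ) (hN : nN ≤ 1) (hS : nS ≤ 1)
    (hE : nE ≤ 1) (hW : nW ≤ 1) (hsum : nS + nW + nE + nN = 2)
    (hAB : A + B = c + (nN : ZMod 2)) (hGD : G + D = c + (nS : ZMod 2))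
    (hAG : A + G = c + (nE : ZMod 2)) (hBD : B + D = c + (nW : ZMod 2)) :
    (A * B + A + B) + (G * D + G + D) + A * G + B * D = 1 := by
  interval_cases nN <;> interval_cases nS <;> interval_cases nE <;> interval_cases nW <;>
    first
      | omega
      | (push_cast at hAB hGD hAG hBD
         revert A B G D c
         decide)

open scoped Classical in
lemma ncard_four (C : Set Edge) (e1 e2 e3 e4 : Edge) (h12 : e1 ≠ e2) (h13 : e1 ≠ e3)
    (h14 : e1 ≠ e4) (h23 : e2 ≠ e3) (h24 : e2 ≠ e4) (h34 : e3 ≠ e4) :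
    (C ∩ {e1, e2, e3, e4}).ncard =
      (if e1 ∈ C then 1 else 0) + (if e2 ∈ C then 1 else 0) +
      (if e3 ∈ C then 1 else 0) + (if e4 ∈ C then 1 else 0) := by
  have hset : C ∩ {e1, e2, e3, e4} =
      ↑(({e1, e2, e3, e4} : Finset Edge).filter (· ∈ C)) := by
    ext e
    simp [Finset.mem_filter, and_comm]
  rw [hset, Set.ncard_coe_finset, Finset.card_filter]
  rw [show ({e1, e2, e3, e4} : Finset Edge) = insert e1 (insert e2 (insert e3 {e4})) from rfl]
  rw [Finset.sum_insert (by simp [h12, h13, h14]),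
      Finset.sum_insert (by simp [h23, h24]),
      Finset.sum_insert (by simp [h34]), Finset.sum_singleton]
  ring

lemma gridEdge_H_bounds {m n a b : ℤ} (h : gridEdge m n s((a, b), (a + 1, b))) :
    1 ≤ a ∧ a + 1 ≤ m ∧ 1 ≤ b ∧ b ≤ n := by
  obtain ⟨⟨p1, p2⟩, ⟨q1, q2⟩, heq, hp, hq, hadj⟩ := h
  rw [Sym2.eq_iff] at heq
  unfold gridVertex at hp hq
  simp only [Prod.mk.injEq] at heq hp hq hadj
  rcases heq with ⟨⟨e1, e2⟩, e3, e4⟩ | ⟨⟨e1, e2⟩, e3, e4⟩ <;>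
    rcases hadj with ⟨a1, a2⟩ | ⟨a1, a2⟩ <;> omega

lemma gridEdge_V_bounds {m n a b : ℤ} (h : gridEdge m n s((a, b), (a, b + 1))) :
    1 ≤ a ∧ a ≤ m ∧ 1 ≤ b ∧ b + 1 ≤ n := by
  obtain ⟨⟨p1, p2⟩, ⟨q1, q2⟩, heq, hp, hq, hadj⟩ := h
  rw [Sym2.eq_iff] at heq
  unfold gridVertex at hp hq
  simp only [Prod.mk.injEq] at heq hp hq hadj
  rcases heq with ⟨⟨e1, e2⟩, e3, e4⟩ | ⟨⟨e1, e2⟩, e3, e4⟩ <;>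
    rcases hadj with ⟨a1, a2⟩ | ⟨a1, a2⟩ <;> omega

lemma coloring (M : ℤ) (hM : 1 ≤ M) (h v : ℤ → ℤ → ZMod 2)
    (hb : ∀ a b : ℤ, a ≤ 0 ∨ M ≤ a ∨ b ≤ 0 ∨ M ≤ b → h a b = 0)
    (vb : ∀ a b : ℤ, a ≤ 0 ∨ M ≤ a ∨ b ≤ 0 ∨ M ≤ b → v a b = 0)
    (hdeg : ∀ a b : ℤ, h a b + h (a - 1) b + v a b + v a (b - 1) = 0) :
    ∃ χ : ℤ → ℤ → ZMod 2,
      (∀ a b, χ a b = χ a (b - 1) + h a b) ∧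
      (∀ a b, χ a b = χ (a - 1) b + v a b) ∧
      (∀ a b, a ≤ 0 ∨ M ≤ a ∨ b ≤ 0 ∨ M ≤ b → χ a b = 0) := by
  set χ : ℤ → ℤ → ZMod 2 := fun a b => ∑ t ∈ Finset.Icc 1 b, h a t with hχ
  have hstep : ∀ a b : ℤ, χ a b = χ a (b - 1) + h a b := by
    intro a b
    by_cases hb1 : 1 ≤ b
    · have hins : Finset.Icc (1 : ℤ) b = insert b (Finset.Icc 1 (b - 1)) := by
        ext t; simp only [Finset.mem_Icc, Finset.mem_insert]; omega
      rw [hχ]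
      simp only []
      rw [hins, Finset.sum_insert (by simp only [Finset.mem_Icc]; omega)]
      ring
    · have e1 : Finset.Icc (1 : ℤ) b = ∅ := Finset.Icc_eq_empty (by omega)
      have e2 : Finset.Icc (1 : ℤ) (b - 1) = ∅ := Finset.Icc_eq_empty (by omega)
      rw [hχ]
      simp only []
      rw [e1, e2, hb a b (by omega)]
      simp
  have hA : ∀ a b : ℤ, b ≤ 0 → χ a b = 0 := by
    intro a b hb0
    rw [hχ]
    simp only []
    rw [Finset.Icc_eq_empty (by omega), Finset.sum_empty]
  have hL2 : ∀ a b : ℤ, χ a b = χ (a - 1) b + v a b := by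
    intro a b
    rcases le_or_gt b 0 with h0 | h0
    · rw [hA a b h0, hA (a - 1) b h0, vb a b (by omega), add_zero]
    · have key : ∀ b' : ℤ, 0 ≤ b' → χ a b' = χ (a - 1) b' + v a b' := by
        refine Int.le_induction ?_ ?_
        · rw [hA a 0 le_rfl, hA (a - 1) 0 le_rfl, vb a 0 (by omega), add_zero]
        · intro b' hb' ih
          have r1 : χ a (b' + 1) = χ a b' + h a (b' + 1) := by
            have := hstep a (b' + 1); rwa [add_sub_cancel_right] at this
          have r2 : χ (a - 1) (b' + 1) = χ (a - 1) b' + h (a - 1) (b' + 1) := by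
            have := hstep (a - 1) (b' + 1); rwa [add_sub_cancel_right] at this
          have hd : h a (b' + 1) + h (a - 1) (b' + 1) + v a (b' + 1) + v a b' = 0 := by
            have := hdeg a (b' + 1); rwa [add_sub_cancel_right] at this
          rw [r1, r2, ih]
          have hz : ∀ x hv hb ha' va' : ZMod 2, hb + ha' + va' + hv = 0 →
              x + hv + hb = x + ha' + va' := by decide
          exact hz (χ (a - 1) b') (v a b') (h a (b' + 1)) (h (a - 1) (b' + 1)) (v a (b' + 1)) hd
      exact key b (by omega)
  refine ⟨χ, hstep, hL2, ?_⟩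
  have htop : ∀ a : ℤ, χ a M = 0 := by
    have step : ∀ a : ℤ, 0 ≤ a → χ a M = 0 := by
      refine Int.le_induction ?_ ?_
      · rw [hχ]; simp only []
        exact Finset.sum_eq_zero fun t _ => hb 0 t (by omega)
      · intro a ha ih
        have := hL2 (a + 1) M
        rw [add_sub_cancel_right, ih, vb (a + 1) M (by omega), add_zero] at this
        exact this
    intro a
    rcases le_or_gt a 0 with h0 | h0
    · rw [hχ]; simp only []
      exact Finset.sum_eq_zero fun t _ => hb a t (by omega)
    · exact step a (by omega)
  intro a b hcase
  rcases hcase with h0 | h0 | h0 | h0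
  · rw [hχ]; simp only []
    exact Finset.sum_eq_zero fun t _ => hb a t (by omega)
  · rw [hχ]; simp only []
    exact Finset.sum_eq_zero fun t _ => hb a t (by omega)
  · exact hA a b h0
  · have : χ a b = χ a M := by
      rw [hχ]; simp only []
      refine (Finset.sum_subset (Finset.Icc_subset_Icc_right h0) ?_).symm
      intro t ht hnt
      simp only [Finset.mem_Icc] at ht hnt
      exact hb a t (by omega)
    rw [this, htop]

lemma shift1 (f : ℤ → ZMod 2) (R : ℤ) (hR : 1 ≤ R)
    (hf : ∀ j : ℤ, j ≤ 0 ∨ R ≤ j → f j = 0) :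
    ∑ j ∈ Finset.Icc (-R) R, f (j - 1) = ∑ j ∈ Finset.Icc (-R) R, f j := by
  have h1 : ∑ j ∈ Finset.Icc (-R) R, f j = ∑ j ∈ Finset.Icc 1 (R - 1), f j := by
    refine (Finset.sum_subset (by intro t ht; simp only [Finset.mem_Icc] at *; omega) ?_).symm
    intro t ht hnt; simp only [Finset.mem_Icc] at ht hnt
    exact hf t (by omega)
  have h2 : ∑ j ∈ Finset.Icc (-R) R, f (j - 1) = ∑ j ∈ Finset.Icc (-R - 1) (R - 1), f j := by
    rw [show Finset.Icc (-R - 1) (R - 1) = (Finset.Icc (-R) R).map (addRightEmbedding (-1)) by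
      rw [Finset.map_add_right_Icc]; congr 1 <;> ring]
    rw [Finset.sum_map]
    rfl
  have h3 : ∑ j ∈ Finset.Icc (-R - 1) (R - 1), f j = ∑ j ∈ Finset.Icc 1 (R - 1), f j := by
    refine (Finset.sum_subset (by intro t ht; simp only [Finset.mem_Icc] at *; omega) ?_).symm
    intro t ht hnt; simp only [Finset.mem_Icc] at ht hnt
    exact hf t (by omega)
  rw [h1, h2, h3]

lemma shiftj (F : ℤ → ℤ → ZMod 2) (R : ℤ) (hR : 1 ≤ R)
    (hF : ∀ i j : ℤ, j ≤ 0 ∨ R ≤ j → F i j = 0) :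
    ∑ p ∈ Finset.Icc (-R) R ×ˢ Finset.Icc (-R) R, F p.1 (p.2 - 1) =
    ∑ p ∈ Finset.Icc (-R) R ×ˢ Finset.Icc (-R) R, F p.1 p.2 := by
  rw [Finset.sum_product' (f := fun i j => F i (j - 1)), Finset.sum_product' (f := F)]
  exact Finset.sum_congr rfl fun i _ => shift1 (F i) R hR fun j hj => hF i j hj

lemma shifti (F : ℤ → ℤ → ZMod 2) (R : ℤ) (hR : 1 ≤ R)
    (hF : ∀ i j : ℤ, i ≤ 0 ∨ R ≤ i → F i j = 0) :
    ∑ p ∈ Finset.Icc (-R) R ×ˢ Finset.Icc (-R) R, F (p.1 - 1) p.2 =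
    ∑ p ∈ Finset.Icc (-R) R ×ˢ Finset.Icc (-R) R, F p.1 p.2 := by
  rw [Finset.sum_product' (f := fun i j => F (i - 1) j), Finset.sum_product' (f := F)]
  rw [Finset.sum_comm, Finset.sum_comm (f := fun i j => F i j)]
  exact Finset.sum_congr rfl fun j _ => shift1 (fun i => F i j) R hR fun i hi => hF i j hi

theorem stmt11 (m n : ℤ) (hm : 0 < m) (hn : 0 < n) (hm4 : m % 4 = 2) (hn4 : n % 4 = 2) :
    ¬ ∃ C : Set Edge, IsPseudocycle m n C ∧
      ∀ a b : ℤ, isCell m n a b → a % 2 = 1 → b % 2 = 1 → cellCount C a b = 2 := by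
  classical
  rintro ⟨C, ⟨hCgrid, hCdeg⟩, hclue⟩
  set nh : ℤ → ℤ → ℕ := fun a b => if s(((a : ℤ), b), (a + 1, b)) ∈ C then 1 else 0 with hnh
  set nv : ℤ → ℤ → ℕ := fun a b => if s(((a : ℤ), b), (a, b + 1)) ∈ C then 1 else 0 with hnv
  have nh_def : ∀ a b : ℤ, nh a b = if s(((a : ℤ), b), (a + 1, b)) ∈ C then 1 else 0 :=
    fun a b => rfl
  have nv_def : ∀ a b : ℤ, nv a b = if s(((a : ℤ), b), (a, b + 1)) ∈ C then 1 else 0 :=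
    fun a b => rfl
  have hnh_le : ∀ a b : ℤ, nh a b ≤ 1 := by
    intro a b; rw [nh_def]; split <;> omega
  have hnv_le : ∀ a b : ℤ, nv a b ≤ 1 := by
    intro a b; rw [nv_def]; split <;> omega
  have hH0 : ∀ a b : ℤ, ¬(1 ≤ a ∧ a + 1 ≤ m ∧ 1 ≤ b ∧ b ≤ n) → nh a b = 0 := by
    intro a b hbnd
    rw [nh_def, if_neg]
    intro hmem
    exact hbnd (gridEdge_H_bounds (hCgrid _ hmem))
  have hV0 : ∀ a b : ℤ, ¬(1 ≤ a ∧ a ≤ m ∧ 1 ≤ b ∧ b + 1 ≤ n) → nv a b = 0 := by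
    intro a b hbnd
    rw [nv_def, if_neg]
    intro hmem
    exact hbnd (gridEdge_V_bounds (hCgrid _ hmem))
  -- degree of a vertex as a sum of the four indicators
  have hdegset : ∀ x y : ℤ, {e ∈ C | ((x, y) : V) ∈ e} =
      C ∩ {s(((x : ℤ), y), (x + 1, y)), s(((x : ℤ), y), (x, y + 1)),
           s(((x : ℤ) - 1, y), (x - 1 + 1, y)), s(((x : ℤ), y - 1), (x, y - 1 + 1))} := by
    intro x y
    ext e
    simp only [Set.mem_setOf_eq, Set.mem_inter_iff, Set.mem_insert_iff, Set.mem_singleton_iff]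
    constructor
    · rintro ⟨heC, hpe⟩
      refine ⟨heC, ?_⟩
      obtain ⟨⟨p1, p2⟩, ⟨q1, q2⟩, rfl, hp, hq, hadj⟩ := hCgrid e heC
      rw [Sym2.mem_iff] at hpe
      simp only [Prod.mk.injEq] at hpe hadj
      simp only [Sym2.eq_iff, Prod.mk.injEq]
      rcases hadj with ⟨a1, a2⟩ | ⟨a1, a2⟩ <;> rcases hpe with ⟨e1, e2⟩ | ⟨e1, e2⟩ <;> omega
    · rintro ⟨heC, hmem⟩
      refine ⟨heC, ?_⟩
      rcases hmem with rfl | rfl | rfl | rfl <;>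
        (rw [Sym2.mem_iff, Prod.mk.injEq, Prod.mk.injEq]) <;> omega
  have degeq : ∀ x y : ℤ, degree C (x, y) = nh x y + nv x y + nh (x - 1) y + nv x (y - 1) := by
    intro x y
    unfold degree
    rw [hdegset x y,
      ncard_four C _ _ _ _
        (by simp only [ne_eq, Sym2.eq_iff, Prod.mk.injEq]; omega)
        (by simp only [ne_eq, Sym2.eq_iff, Prod.mk.injEq]; omega)
        (by simp only [ne_eq, Sym2.eq_iff, Prod.mk.injEq]; omega)
        (by simp only [ne_eq, Sym2.eq_iff, Prod.mk.injEq]; omega)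
        (by simp only [ne_eq, Sym2.eq_iff, Prod.mk.injEq]; omega)
        (by simp only [ne_eq, Sym2.eq_iff, Prod.mk.injEq]; omega)]
  have hdeg1 : ∀ x y : ℤ,
      ((nh x y : ZMod 2) + (nh (x - 1) y : ZMod 2) +
       (nv x y : ZMod 2) + (nv x (y - 1) : ZMod 2)) = 0 := by
    intro x y
    have h0 := hCdeg (x, y)
    rw [degeq x y] at h0
    have hc : ((nh x y + nv x y + nh (x - 1) y + nv x (y - 1) : ℕ) : ZMod 2) = 0 :=
      natcast_even _ (by omega)
    push_cast at hc
    linear_combination hc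
  -- cell counts as sums of the four indicators
  have cellsum : ∀ a b : ℤ,
      cellCount C a b = nh a b + nv a b + nv (a + 1) b + nh a (b + 1) := by
    intro a b
    unfold cellCount cellEdges
    rw [ncard_four C _ _ _ _
        (by simp only [ne_eq, Sym2.eq_iff, Prod.mk.injEq]; omega)
        (by simp only [ne_eq, Sym2.eq_iff, Prod.mk.injEq]; omega)
        (by simp only [ne_eq, Sym2.eq_iff, Prod.mk.injEq]; omega)
        (by simp only [ne_eq, Sym2.eq_iff, Prod.mk.injEq]; omega)
        (by simp only [ne_eq, Sym2.eq_iff, Prod.mk.injEq]; omega)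
        (by simp only [ne_eq, Sym2.eq_iff, Prod.mk.injEq]; omega)]
  -- the key dichotomy for odd-odd cells
  have key : ∀ i j : ℤ,
      ((1 ≤ i ∧ 2 * i ≤ m ∧ 1 ≤ j ∧ 2 * j ≤ n) ∧
        nh (2 * i - 1) (2 * j - 1) + nv (2 * i - 1) (2 * j - 1) +
          nv (2 * i) (2 * j - 1) + nh (2 * i - 1) (2 * j) = 2) ∨
      (¬(1 ≤ i ∧ 2 * i ≤ m ∧ 1 ≤ j ∧ 2 * j ≤ n) ∧
        nh (2 * i - 1) (2 * j - 1) = 0 ∧ nv (2 * i - 1) (2 * j - 1) = 0 ∧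
        nv (2 * i) (2 * j - 1) = 0 ∧ nh (2 * i - 1) (2 * j) = 0) := by
    intro i j
    by_cases hc : 1 ≤ i ∧ 2 * i ≤ m ∧ 1 ≤ j ∧ 2 * j ≤ n
    · left
      refine ⟨hc, ?_⟩
      have hcell : isCell m n (2 * i - 1) (2 * j - 1) :=
        ⟨by omega, by omega, by omega, by omega⟩
      have h2 := hclue _ _ hcell (by omega) (by omega)
      rw [cellsum] at h2
      rw [show (2 * i - 1 + 1 : ℤ) = 2 * i by ring, show (2 * j - 1 + 1 : ℤ) = 2 * j by ring]
        at h2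
      exact h2
    · right
      exact ⟨hc, hH0 (2 * i - 1) (2 * j - 1) (by omega), hV0 (2 * i - 1) (2 * j - 1) (by omega),
        hV0 (2 * i) (2 * j - 1) (by omega), hH0 (2 * i - 1) (2 * j) (by omega)⟩
  -- level 1 coloring
  obtain ⟨χ, hχ1, hχ2, hχv⟩ :=
    coloring (m + n) (by omega) (fun a b => (nh a b : ZMod 2)) (fun a b => (nv a b : ZMod 2))
      (by intro a b hab
          show (nh a b : ZMod 2) = 0
          have : nh a b = 0 := hH0 a b (by omega)
          rw [this]; simp)
      (by intro a b hab
          show (nv a b : ZMod 2) = 0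
          have : nv a b = 0 := hV0 a b (by omega)
          rw [this]; simp)
      (by intro a b; exact hdeg1 a b)
  have hx1 : ∀ a b : ℤ, χ a b = χ a (b - 1) + (nh a b : ZMod 2) := hχ1
  have hx2 : ∀ a b : ℤ, χ a b = χ (a - 1) b + (nv a b : ZMod 2) := hχ2
  have hxv : ∀ a b : ℤ, a ≤ 0 ∨ m + n ≤ a ∨ b ≤ 0 ∨ m + n ≤ b → χ a b = 0 := hχv
  -- level 2 coloring
  obtain ⟨ψ, hψ1, hψ2, hψv⟩ :=
    coloring (m + n) (by omega) (fun i j => χ (2 * i) (2 * j - 1))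
      (fun i j => χ (2 * i - 1) (2 * j))
      (by intro i j hij; exact hxv (2 * i) (2 * j - 1) (by omega))
      (by intro i j hij; exact hxv (2 * i - 1) (2 * j) (by omega))
      (by
        intro i j
        show χ (2 * i) (2 * j - 1) + χ (2 * (i - 1)) (2 * j - 1) +
          χ (2 * i - 1) (2 * j) + χ (2 * i - 1) (2 * (j - 1)) = 0
        have t1 : χ (2 * i) (2 * j - 1) =
            χ (2 * i - 1) (2 * j - 1) + (nv (2 * i) (2 * j - 1) : ZMod 2) :=
          hx2 (2 * i) (2 * j - 1)
        have t2 : χ (2 * (i - 1)) (2 * j - 1) =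
            χ (2 * i - 1) (2 * j - 1) + (nv (2 * i - 1) (2 * j - 1) : ZMod 2) := by
          rw [show (2 * (i - 1) : ℤ) = 2 * i - 1 - 1 by ring]
          exact z3b _ _ _ (hx2 (2 * i - 1) (2 * j - 1))
        have t3 : χ (2 * i - 1) (2 * j) =
            χ (2 * i - 1) (2 * j - 1) + (nh (2 * i - 1) (2 * j) : ZMod 2) :=
          hx1 (2 * i - 1) (2 * j)
        have t4 : χ (2 * i - 1) (2 * (j - 1)) =
            χ (2 * i - 1) (2 * j - 1) + (nh (2 * i - 1) (2 * j - 1) : ZMod 2) := by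
          rw [show (2 * (j - 1) : ℤ) = 2 * j - 1 - 1 by ring]
          exact z3b _ _ _ (hx1 (2 * i - 1) (2 * j - 1))
        rw [t1, t2, t3, t4]
        refine z6 _ _ _ _ _ ?_
        rcases key i j with ⟨_, hs⟩ | ⟨_, h1, h2, h3, h4⟩
        · refine z8 _ _ _ _ ?_
          have hcast : ((nh (2 * i - 1) (2 * j - 1) + nv (2 * i - 1) (2 * j - 1) +
              nv (2 * i) (2 * j - 1) + nh (2 * i - 1) (2 * j) : ℕ) : ZMod 2) =
              ((2 : ℕ) : ZMod 2) := by rw [hs]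
          push_cast at hcast
          linear_combination hcast
        · rw [h1, h2, h3, h4]; simp)
  have hp1 : ∀ i j : ℤ, ψ i j = ψ i (j - 1) + χ (2 * i) (2 * j - 1) := hψ1
  have hp2 : ∀ i j : ℤ, ψ i j = ψ (i - 1) j + χ (2 * i - 1) (2 * j) := hψ2
  have hpv : ∀ i j : ℤ, i ≤ 0 ∨ m + n ≤ i ∨ j ≤ 0 ∨ m + n ≤ j → ψ i j = 0 := hψv
  -- the local quantities
  set F1 : ℤ → ℤ → ZMod 2 := fun i j => ψ i j * ψ (i - 1) j + ψ i j + ψ (i - 1) j with hF1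
  set F2 : ℤ → ℤ → ZMod 2 := fun i j => ψ i j * ψ i (j - 1) with hF2
  have pointE : ∀ i j : ℤ,
      F1 i j + F1 i (j - 1) + F2 i j + F2 (i - 1) j =
        if 1 ≤ i ∧ 2 * i ≤ m ∧ 1 ≤ j ∧ 2 * j ≤ n then 1 else 0 := by
    intro i j
    have tN : χ (2 * i - 1) (2 * j) =
        χ (2 * i - 1) (2 * j - 1) + (nh (2 * i - 1) (2 * j) : ZMod 2) := hx1 (2 * i - 1) (2 * j)
    have tS : χ (2 * i - 1) (2 * (j - 1)) =
        χ (2 * i - 1) (2 * j - 1) + (nh (2 * i - 1) (2 * j - 1) : ZMod 2) := by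
      rw [show (2 * (j - 1) : ℤ) = 2 * j - 1 - 1 by ring]
      exact z3b _ _ _ (hx1 (2 * i - 1) (2 * j - 1))
    have tE : χ (2 * i) (2 * j - 1) =
        χ (2 * i - 1) (2 * j - 1) + (nv (2 * i) (2 * j - 1) : ZMod 2) := hx2 (2 * i) (2 * j - 1)
    have tW : χ (2 * (i - 1)) (2 * j - 1) =
        χ (2 * i - 1) (2 * j - 1) + (nv (2 * i - 1) (2 * j - 1) : ZMod 2) := by
      rw [show (2 * (i - 1) : ℤ) = 2 * i - 1 - 1 by ring]
      exact z3b _ _ _ (hx2 (2 * i - 1) (2 * j - 1))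
    have hAB : ψ i j + ψ (i - 1) j =
        χ (2 * i - 1) (2 * j - 1) + (nh (2 * i - 1) (2 * j) : ZMod 2) := by
      have := z3 _ _ _ (hp2 i j); rwa [tN] at this
    have hGD : ψ i (j - 1) + ψ (i - 1) (j - 1) =
        χ (2 * i - 1) (2 * j - 1) + (nh (2 * i - 1) (2 * j - 1) : ZMod 2) := by
      have := z3 _ _ _ (hp2 i (j - 1)); rwa [tS] at this
    have hAG : ψ i j + ψ i (j - 1) =
        χ (2 * i - 1) (2 * j - 1) + (nv (2 * i) (2 * j - 1) : ZMod 2) := by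
      have := z3 _ _ _ (hp1 i j); rwa [tE] at this
    have hBD : ψ (i - 1) j + ψ (i - 1) (j - 1) =
        χ (2 * i - 1) (2 * j - 1) + (nv (2 * i - 1) (2 * j - 1) : ZMod 2) := by
      have := z3 _ _ _ (hp1 (i - 1) j); rwa [tW] at this
    rcases key i j with ⟨hcond, hs⟩ | ⟨hcond, h1, h2, h3, h4⟩
    · rw [if_pos hcond]
      exact Emaster _ _ _ _ _ _ _ _ _ (hnh_le _ _) (hnh_le _ _) (hnv_le _ _) (hnv_le _ _)
        (by omega) hAB hGD hAG hBD
    · rw [if_neg hcond]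
      rw [h4] at hAB; rw [h1] at hGD; rw [h3] at hAG; rw [h2] at hBD
      simp only [Nat.cast_zero, add_zero] at hAB hGD hAG hBD
      exact Emaster0 _ _ _ _ _ hAB hGD hAG hBD
  -- summing over a large box
  set R : ℤ := m + n with hR
  have hF1van : ∀ i j : ℤ, j ≤ 0 ∨ R ≤ j → F1 i j = 0 := by
    intro i j hj
    rw [hF1]
    simp only []
    rw [hpv i j (by omega), hpv (i - 1) j (by omega)]
    ring
  have hF2vani : ∀ i j : ℤ, i ≤ 0 ∨ R ≤ i → F2 i j = 0 := by
    intro i j hi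
    rw [hF2]
    simp only []
    rw [hpv i j (by omega)]
    ring
  have hsum0 : ∑ p ∈ Finset.Icc (-R) R ×ˢ Finset.Icc (-R) R,
      (F1 p.1 p.2 + F1 p.1 (p.2 - 1) + F2 p.1 p.2 + F2 (p.1 - 1) p.2) = (0 : ZMod 2) := by
    rw [Finset.sum_add_distrib, Finset.sum_add_distrib, Finset.sum_add_distrib]
    rw [shiftj F1 R (by omega) hF1van, shifti F2 R (by omega) hF2vani]
    have := zxx (∑ p ∈ Finset.Icc (-R) R ×ˢ Finset.Icc (-R) R, F1 p.1 p.2)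
      (∑ p ∈ Finset.Icc (-R) R ×ˢ Finset.Icc (-R) R, F2 p.1 p.2)
    linear_combination this
  have hsum1 : ∑ p ∈ Finset.Icc (-R) R ×ˢ Finset.Icc (-R) R,
      (F1 p.1 p.2 + F1 p.1 (p.2 - 1) + F2 p.1 p.2 + F2 (p.1 - 1) p.2) = (1 : ZMod 2) := by
    rw [Finset.sum_congr rfl fun p _ => pointE p.1 p.2]
    rw [Finset.sum_boole]
    have hfil : ((Finset.Icc (-R) R ×ˢ Finset.Icc (-R) R).filter
        fun p : ℤ × ℤ => 1 ≤ p.1 ∧ 2 * p.1 ≤ m ∧ 1 ≤ p.2 ∧ 2 * p.2 ≤ n).card =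
        (m / 2).toNat * (n / 2).toNat := by
      have hset : ((Finset.Icc (-R) R ×ˢ Finset.Icc (-R) R).filter
          fun p : ℤ × ℤ => 1 ≤ p.1 ∧ 2 * p.1 ≤ m ∧ 1 ≤ p.2 ∧ 2 * p.2 ≤ n) =
          Finset.Icc 1 (m / 2) ×ˢ Finset.Icc 1 (n / 2) := by
        ext ⟨i, j⟩
        simp only [Finset.mem_filter, Finset.mem_product, Finset.mem_Icc]
        omega
      rw [hset, Finset.card_product, Int.card_Icc, Int.card_Icc]
      rw [show (m / 2 + 1 - 1 : ℤ) = m / 2 by ring, show (n / 2 + 1 - 1 : ℤ) = n / 2 by ring]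
    rw [hfil]
    refine natcast_odd _ ?_
    have h1 : (m / 2).toNat % 2 = 1 := by omega
    have h2 : (n / 2).toNat % 2 = 1 := by omega
    rw [Nat.mul_mod, h1, h2]
  rw [hsum0] at hsum1
  exact absurd hsum1 (by decide)


end Slitherlink
end

section
/- If m ≤ 2 or n ≤ 2, then every cycle in the m × n grid graph is uniquely determined by its signature. -/
open scoped Classical


namespace Slitherlink

/-! ### auxiliary -/

def hE (b : ℤ) : Edge := s(((1:ℤ),b),((2:ℤ),b))
def lE (b : ℤ) : Edge := s(((1:ℤ),b),((1:ℤ),b+1))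
def rE (b : ℤ) : Edge := s(((2:ℤ),b),((2:ℤ),b+1))

lemma hE_ne_lE (a b : ℤ) : hE a ≠ lE b := by
  simp [hE, lE, Sym2.eq_iff, Prod.ext_iff]
lemma hE_ne_rE (a b : ℤ) : hE a ≠ rE b := by
  simp [hE, rE, Sym2.eq_iff, Prod.ext_iff]
lemma lE_ne_rE (a b : ℤ) : lE a ≠ rE b := by
  simp [lE, rE, Sym2.eq_iff, Prod.ext_iff]
lemma hE_inj {a b : ℤ} : hE a = hE b ↔ a = b := by
  simp [hE, Sym2.eq_iff, Prod.ext_iff]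
lemma lE_inj {a b : ℤ} : lE a = lE b ↔ a = b := by
  simp [lE, Sym2.eq_iff, Prod.ext_iff]; omega
lemma rE_inj {a b : ℤ} : rE a = rE b ↔ a = b := by
  simp [rE, Sym2.eq_iff, Prod.ext_iff]; omega

lemma ncard_inter_triple (S : Set Edge) (x y z : Edge) (hxy : x ≠ y) (hxz : x ≠ z)
    (hyz : y ≠ z) :
    (S ∩ {x, y, z}).ncard =
      (if x ∈ S then 1 else 0) + (if y ∈ S then 1 else 0) + (if z ∈ S then 1 else 0) := by
  classical
  have h : S ∩ {x, y, z} = ((({x, y, z} : Finset Edge).filter (· ∈ S)) : Set Edge) := by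
    ext a; simp [and_comm]
  rw [h, Set.ncard_coe_finset, Finset.card_filter,
    Finset.sum_insert (by simp [hxy, hxz]), Finset.sum_insert (by simp [hyz]),
    Finset.sum_singleton]
  ring

lemma ncard_inter_quad (S : Set Edge) (w x y z : Edge) (hwx : w ≠ x) (hwy : w ≠ y)
    (hwz : w ≠ z) (hxy : x ≠ y) (hxz : x ≠ z) (hyz : y ≠ z) :
    (S ∩ {w, x, y, z}).ncard =
      (if w ∈ S then 1 else 0) + (if x ∈ S then 1 else 0) + (if y ∈ S then 1 else 0) +
        (if z ∈ S then 1 else 0) := by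
  classical
  have h : S ∩ {w, x, y, z} = ((({w, x, y, z} : Finset Edge).filter (· ∈ S)) : Set Edge) := by
    ext a; simp [and_comm]
  rw [h, Set.ncard_coe_finset, Finset.card_filter,
    Finset.sum_insert (by simp [hwx, hwy, hwz]), Finset.sum_insert (by simp [hxy, hxz]),
    Finset.sum_insert (by simp [hyz]), Finset.sum_singleton]
  ring

/-- every edge of a `2 × n` grid is of one of three forms -/
lemma edge_form {n : ℤ} {e : Edge} (he : gridEdge 2 n e) :
    ∃ b : ℤ, 1 ≤ b ∧ ((b ≤ n ∧ e = hE b) ∨ (b + 1 ≤ n ∧ e = lE b) ∨ (b + 1 ≤ n ∧ e = rE b)) := by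
  obtain ⟨p, q, rfl, hp, hq, hor⟩ := he
  obtain ⟨hp1, hp2, hp3, hp4⟩ := hp
  obtain ⟨hq1, hq2, hq3, hq4⟩ := hq
  rcases hor with ⟨h1, h2⟩ | ⟨h1, h2⟩
  · refine ⟨p.2, hp3, Or.inl ⟨hp4, ?_⟩⟩
    have hp' : p = (1, p.2) := by ext <;> simp <;> omega
    have hq' : q = (2, p.2) := by ext <;> simp <;> omega
    rw [hp', hq']; rfl
  · refine ⟨p.2, hp3, ?_⟩
    rcases (by omega : p.1 = 1 ∨ p.1 = 2) with h | h
    · refine Or.inr (Or.inl ⟨by omega, ?_⟩)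
      have hp' : p = (1, p.2) := by ext <;> simp <;> omega
      have hq' : q = (1, p.2 + 1) := by ext <;> simp <;> omega
      rw [hp', hq']; rfl
    · refine Or.inr (Or.inr ⟨by omega, ?_⟩)
      have hp' : p = (2, p.2) := by ext <;> simp <;> omega
      have hq' : q = (2, p.2 + 1) := by ext <;> simp <;> omega
      rw [hp', hq']; rfl

/-! ### degree formulas -/

lemma degree_left {n : ℤ} {C : Set Edge} (hall : ∀ e ∈ C, gridEdge 2 n e) (b : ℤ) :
    degree C (1, b) =
      (if hE b ∈ C then 1 else 0) + (if lE (b-1) ∈ C then 1 else 0) +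
        (if lE b ∈ C then 1 else 0) := by
  have hset : {e ∈ C | ((1:ℤ), b) ∈ e} = C ∩ {hE b, lE (b-1), lE b} := by
    ext e
    simp only [Set.mem_setOf_eq, Set.mem_inter_iff, Set.mem_insert_iff, Set.mem_singleton_iff]
    constructor
    · rintro ⟨heC, hm⟩
      refine ⟨heC, ?_⟩
      obtain ⟨b', hb1, h⟩ := edge_form (hall e heC)
      rcases h with ⟨_, rfl⟩ | ⟨_, rfl⟩ | ⟨_, rfl⟩
      · left
        simp only [hE, Sym2.mem_iff, Prod.ext_iff] at hm ⊢
        have : b' = b := by rcases hm with ⟨h1, h2⟩ | ⟨h1, h2⟩ <;> omega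
        rw [this]
      · simp only [lE, Sym2.mem_iff, Prod.ext_iff] at hm
        have : b' = b - 1 ∨ b' = b := by rcases hm with ⟨h1, h2⟩ | ⟨h1, h2⟩ <;> omega
        rcases this with rfl | rfl
        · right; left; rfl
        · right; right; rfl
      · simp only [rE, Sym2.mem_iff, Prod.ext_iff] at hm
        omega
    · rintro ⟨heC, h | h | h⟩ <;> subst h <;>
        refine ⟨heC, ?_⟩ <;> simp [hE, lE, Sym2.mem_iff]
  rw [degree, hset,
    ncard_inter_triple C _ _ _ (hE_ne_lE _ _) (hE_ne_lE _ _) (by rw [Ne, lE_inj]; omega)]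

lemma degree_right {n : ℤ} {C : Set Edge} (hall : ∀ e ∈ C, gridEdge 2 n e) (b : ℤ) :
    degree C (2, b) =
      (if hE b ∈ C then 1 else 0) + (if rE (b-1) ∈ C then 1 else 0) +
        (if rE b ∈ C then 1 else 0) := by
  have hset : {e ∈ C | ((2:ℤ), b) ∈ e} = C ∩ {hE b, rE (b-1), rE b} := by
    ext e
    simp only [Set.mem_setOf_eq, Set.mem_inter_iff, Set.mem_insert_iff, Set.mem_singleton_iff]
    constructor
    · rintro ⟨heC, hm⟩
      refine ⟨heC, ?_⟩
      obtain ⟨b', hb1, h⟩ := edge_form (hall e heC)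
      rcases h with ⟨_, rfl⟩ | ⟨_, rfl⟩ | ⟨_, rfl⟩
      · left
        simp only [hE, Sym2.mem_iff, Prod.ext_iff] at hm ⊢
        have : b' = b := by rcases hm with ⟨h1, h2⟩ | ⟨h1, h2⟩ <;> omega
        rw [this]
      · simp only [lE, Sym2.mem_iff, Prod.ext_iff] at hm
        omega
      · simp only [rE, Sym2.mem_iff, Prod.ext_iff] at hm
        have : b' = b - 1 ∨ b' = b := by rcases hm with ⟨h1, h2⟩ | ⟨h1, h2⟩ <;> omega
        rcases this with rfl | rfl
        · right; left; rfl
        · right; right; rfl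
    · rintro ⟨heC, h | h | h⟩ <;> subst h <;>
        refine ⟨heC, ?_⟩ <;> simp [hE, rE, Sym2.mem_iff]
  rw [degree, hset,
    ncard_inter_triple C _ _ _ (hE_ne_rE _ _) (hE_ne_rE _ _) (by rw [Ne, rE_inj]; omega)]
/-! ### bounds -/

lemma lE_bounds {n : ℤ} {C : Set Edge} (hall : ∀ e ∈ C, gridEdge 2 n e) {b : ℤ}
    (h : lE b ∈ C) : 1 ≤ b ∧ b ≤ n - 1 := by
  obtain ⟨b', hb1, hf⟩ := edge_form (hall _ h)
  rcases hf with ⟨_, he⟩ | ⟨hbn, he⟩ | ⟨_, he⟩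
  · exact absurd he.symm (hE_ne_lE _ _)
  · rw [lE_inj] at he; omega
  · exact absurd he (lE_ne_rE _ _)

lemma rE_bounds {n : ℤ} {C : Set Edge} (hall : ∀ e ∈ C, gridEdge 2 n e) {b : ℤ}
    (h : rE b ∈ C) : 1 ≤ b ∧ b ≤ n - 1 := by
  obtain ⟨b', hb1, hf⟩ := edge_form (hall _ h)
  rcases hf with ⟨_, he⟩ | ⟨_, he⟩ | ⟨hbn, he⟩
  · exact absurd he.symm (hE_ne_rE _ _)
  · exact absurd he.symm (lE_ne_rE _ _)
  · rw [rE_inj] at he; omega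

/-! ### left and right verticals agree -/

lemma lr_iff {n : ℤ} {C : Set Edge} (h : IsCycle 2 n C) (b : ℤ) :
    (lE b ∈ C ↔ rE b ∈ C) := by
  obtain ⟨-, hall, hdeg, -⟩ := h
  have key : ∀ k : ℕ, (lE (k : ℤ) ∈ C ↔ rE (k : ℤ) ∈ C) := by
    intro k
    induction k with
    | zero =>
      constructor
      · intro hc; exact absurd ((lE_bounds hall hc).1) (by norm_num)
      · intro hc; exact absurd ((rE_bounds hall hc).1) (by norm_num)
    | succ k ih =>
      have d1 := hdeg (1, (k : ℤ) + 1)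
      have d2 := hdeg (2, (k : ℤ) + 1)
      rw [degree_left hall] at d1
      rw [degree_right hall] at d2
      rw [show (k : ℤ) + 1 - 1 = (k : ℤ) by ring] at d1 d2
      push_cast
      rcases em (hE ((k : ℤ)+1) ∈ C) with h1 | h1 <;>
        rcases em (lE (k : ℤ) ∈ C) with h2 | h2 <;>
        rcases em (lE ((k : ℤ)+1) ∈ C) with h3 | h3 <;>
        rcases em (rE ((k : ℤ)+1) ∈ C) with h4 | h4 <;>
        have h5 := ih.symm <;>
        simp_all <;> omega
  rcases le_or_gt 0 b with hb | hb
  · have : b = ((b.toNat : ℤ)) := by omega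
    rw [this]; exact key b.toNat
  · constructor
    · intro hc; exact absurd ((lE_bounds hall hc).1) (by omega)
    · intro hc; exact absurd ((rE_bounds hall hc).1) (by omega)

/-! ### horizontal edges are determined by verticals -/

lemma hE_iff {n : ℤ} {C : Set Edge} (h : IsCycle 2 n C) (b : ℤ) :
    (hE b ∈ C ↔ ¬(lE (b-1) ∈ C ↔ lE b ∈ C)) := by
  obtain ⟨-, hall, hdeg, -⟩ := h
  have d1 := hdeg (1, b)
  rw [degree_left hall] at d1
  rcases em (hE b ∈ C) with h1 | h1 <;>
    rcases em (lE (b-1) ∈ C) with h2 | h2 <;>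
    rcases em (lE b ∈ C) with h3 | h3 <;>
    simp_all
/-! ### the set of verticals is an interval -/

lemma interval {n : ℤ} {C : Set Edge} (h : IsCycle 2 n C) {b b' c : ℤ}
    (hb : lE b ∈ C) (hb' : lE b' ∈ C) (h1 : b ≤ c) (h2 : c ≤ b') : lE c ∈ C := by
  by_contra hlc
  have hall := h.2.1
  have hrc : rE c ∉ C := fun h' => hlc ((lr_iff h c).mpr h')
  have hreach := h.2.2.2 (1, b) (1, b' + 1)
    ⟨lE b, hb, by simp [lE, Sym2.mem_iff]⟩ ⟨lE b', hb', by simp [lE, Sym2.mem_iff]⟩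
  have hstep : ∀ x y : V, (cycleGraph C).Adj x y → (x.2 ≤ c ↔ y.2 ≤ c) := by
    intro x y ha
    have hm : s(x, y) ∈ C := ha.2
    obtain ⟨d, hd1, hf⟩ := edge_form (hall _ hm)
    rcases hf with ⟨_, he⟩ | ⟨_, he⟩ | ⟨_, he⟩
    · rw [hE, Sym2.eq_iff] at he
      simp only [Prod.ext_iff] at he
      omega
    · have hdc : d ≠ c := fun hh => hlc (hh ▸ he ▸ hm)
      rw [lE, Sym2.eq_iff] at he
      simp only [Prod.ext_iff] at he
      omega
    · have hdc : d ≠ c := fun hh => hrc (hh ▸ he ▸ hm)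
      rw [rE, Sym2.eq_iff] at he
      simp only [Prod.ext_iff] at he
      omega
  have hwalk : ∀ (x y : V), (cycleGraph C).Walk x y → (x.2 ≤ c ↔ y.2 ≤ c) := by
    intro x y w
    induction w with
    | nil => exact Iff.rfl
    | cons ha p ih => exact (hstep _ _ ha).trans ih
  obtain ⟨w⟩ := hreach
  have hinv := hwalk _ _ w
  simp only at hinv
  omega
lemma exists_lE {n : ℤ} {C : Set Edge} (h : IsCycle 2 n C) : ∃ b, lE b ∈ C := by
  obtain ⟨e, he⟩ := h.1
  obtain ⟨b, hb1, hf⟩ := edge_form (h.2.1 _ he)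
  rcases hf with ⟨_, rfl⟩ | ⟨_, rfl⟩ | ⟨_, rfl⟩
  · have := (hE_iff h b).mp he
    by_cases hb : lE (b-1) ∈ C
    · exact ⟨b-1, hb⟩
    · exact ⟨b, by tauto⟩
  · exact ⟨b, he⟩
  · exact ⟨b, (lr_iff h b).mpr he⟩

/-- the cycle going from row `s` to row `t+1`. -/
def cycOf (s t : ℤ) : Set Edge :=
  {e | (∃ b, s ≤ b ∧ b ≤ t ∧ (e = lE b ∨ e = rE b)) ∨ e = hE s ∨ e = hE (t+1)}

lemma cycle_eq {n : ℤ} {C : Set Edge} (h : IsCycle 2 n C) :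
    ∃ s t : ℤ, 1 ≤ s ∧ s ≤ t ∧ t ≤ n - 1 ∧ C = cycOf s t := by
  classical
  obtain ⟨b0, hb0⟩ := exists_lE h
  have hfin : {b : ℤ | lE b ∈ C}.Finite := by
    apply (Set.finite_Icc 1 (n-1)).subset
    intro b hb
    simpa [Set.mem_Icc] using lE_bounds h.2.1 hb
  have hne : hfin.toFinset.Nonempty := ⟨b0, by simpa [Set.Finite.mem_toFinset] using hb0⟩
  set s := hfin.toFinset.min' hne with hs
  set t := hfin.toFinset.max' hne with ht
  have hsL : lE s ∈ C := by
    have := hfin.toFinset.min'_mem hne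
    simpa [Set.Finite.mem_toFinset] using this
  have htL : lE t ∈ C := by
    have := hfin.toFinset.max'_mem hne
    simpa [Set.Finite.mem_toFinset] using this
  have hiff : ∀ b, lE b ∈ C ↔ (s ≤ b ∧ b ≤ t) := by
    intro b
    constructor
    · intro hb
      have hmem : b ∈ hfin.toFinset := by simpa [Set.Finite.mem_toFinset] using hb
      exact ⟨Finset.min'_le _ _ hmem, Finset.le_max' _ _ hmem⟩
    · rintro ⟨h1s, h1t⟩
      exact interval h hsL htL h1s h1t
  have hst : s ≤ t := by
    have := (hiff s).mp hsL
    omega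
  have hs1 := lE_bounds h.2.1 hsL
  have ht1 := lE_bounds h.2.1 htL
  refine ⟨s, t, hs1.1, hst, ht1.2, ?_⟩
  ext e
  constructor
  · intro he
    obtain ⟨b, hb1, hf⟩ := edge_form (h.2.1 _ he)
    rcases hf with ⟨_, rfl⟩ | ⟨_, rfl⟩ | ⟨_, rfl⟩
    · have hx := (hE_iff h b).mp he
      rw [hiff, hiff] at hx
      have hb : b = s ∨ b = t + 1 := by omega
      rcases hb with rfl | rfl
      · exact Or.inr (Or.inl rfl)
      · exact Or.inr (Or.inr rfl)
    · have := (hiff b).mp he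
      exact Or.inl ⟨b, this.1, this.2, Or.inl rfl⟩
    · have := (hiff b).mp ((lr_iff h b).mpr he)
      exact Or.inl ⟨b, this.1, this.2, Or.inr rfl⟩
  · intro he
    rcases he with ⟨b, hsb, hbt, rfl | rfl⟩ | rfl | rfl
    · exact (hiff b).mpr ⟨hsb, hbt⟩
    · exact (lr_iff h b).mp ((hiff b).mpr ⟨hsb, hbt⟩)
    · refine (hE_iff h s).mpr ?_
      rw [hiff, hiff]; omega
    · refine (hE_iff h (t+1)).mpr ?_
      rw [hiff, hiff]; omega
lemma hE_mem_cycOf {s t b : ℤ} : hE b ∈ cycOf s t ↔ (b = s ∨ b = t + 1) := by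
  constructor
  · rintro (⟨b', _, _, he | he⟩ | he | he)
    · exact absurd he (hE_ne_lE _ _)
    · exact absurd he (hE_ne_rE _ _)
    · exact Or.inl (hE_inj.mp he)
    · exact Or.inr (hE_inj.mp he)
  · rintro (rfl | rfl)
    · exact Or.inr (Or.inl rfl)
    · exact Or.inr (Or.inr rfl)

lemma lE_mem_cycOf {s t b : ℤ} : lE b ∈ cycOf s t ↔ (s ≤ b ∧ b ≤ t) := by
  constructor
  · rintro (⟨b', hb1, hb2, he | he⟩ | he | he)
    · rw [lE_inj.mp he]; exact ⟨hb1, hb2⟩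
    · exact absurd he (lE_ne_rE _ _)
    · exact absurd he.symm (hE_ne_lE _ _)
    · exact absurd he.symm (hE_ne_lE _ _)
  · rintro ⟨h1, h2⟩
    exact Or.inl ⟨b, h1, h2, Or.inl rfl⟩

lemma rE_mem_cycOf {s t b : ℤ} : rE b ∈ cycOf s t ↔ (s ≤ b ∧ b ≤ t) := by
  constructor
  · rintro (⟨b', hb1, hb2, he | he⟩ | he | he)
    · exact absurd he.symm (lE_ne_rE _ _)
    · rw [rE_inj.mp he]; exact ⟨hb1, hb2⟩
    · exact absurd he.symm (hE_ne_rE _ _)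
    · exact absurd he.symm (hE_ne_rE _ _)
  · rintro ⟨h1, h2⟩
    exact Or.inl ⟨b, h1, h2, Or.inr rfl⟩

/-- cell count of the standard cycle -/
noncomputable def cc (s t b : ℤ) : ℕ :=
  (if b = s ∨ b = t + 1 then 1 else 0) + (if s ≤ b ∧ b ≤ t then 1 else 0) +
    (if s ≤ b ∧ b ≤ t then 1 else 0) + (if b + 1 = s ∨ b + 1 = t + 1 then 1 else 0)

lemma cellEdges_one (b : ℤ) : cellEdges 1 b = {hE b, lE b, rE b, hE (b + 1)} := by
  rw [cellEdges]
  norm_num [hE, lE, rE]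

lemma cellCount_cycOf (s t b : ℤ) : cellCount (cycOf s t) 1 b = cc s t b := by
  rw [cellCount, cellEdges_one,
    ncard_inter_quad _ _ _ _ _ (hE_ne_lE _ _) (hE_ne_rE _ _)
      (by rw [Ne, hE_inj]; omega) (lE_ne_rE _ _) (fun hh => hE_ne_lE _ _ hh.symm)
      (fun hh => hE_ne_rE _ _ hh.symm)]
  simp only [cc, hE_mem_cycOf, lE_mem_cycOf, rE_mem_cycOf]

lemma cc_inj {n s t s' t' : ℤ} (hs : 1 ≤ s) (hst : s ≤ t) (ht : t ≤ n - 1)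
    (hs' : 1 ≤ s') (hst' : s' ≤ t') (ht' : t' ≤ n - 1)
    (H : ∀ b, 1 ≤ b → b ≤ n - 1 → cc s t b = cc s' t' b) : s = s' ∧ t = t' := by
  have hss : s = s' := by
    by_contra hne
    rcases lt_or_gt_of_ne hne with hlt | hlt
    · have h1 := H s hs (by omega)
      simp only [cc] at h1; split_ifs at h1 <;> omega
    · have h2 := H s' hs' (by omega)
      simp only [cc] at h2; split_ifs at h2 <;> omega
  subst hss
  rcases lt_trichotomy t t' with hlt | heq | hlt
  · have h3 := H (t + 1) (by omega) (by omega)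
    simp only [cc] at h3; split_ifs at h3 <;> omega
  · exact ⟨rfl, heq⟩
  · have h3 := H (t' + 1) (by omega) (by omega)
    simp only [cc] at h3; split_ifs at h3 <;> omega

/-- the `m = 2` case -/
theorem key2 {n : ℤ} {C₁ C₂ : Set Edge} (h₁ : IsCycle 2 n C₁) (h₂ : IsCycle 2 n C₂)
    (hs : SameSignature 2 n C₁ C₂) : C₁ = C₂ := by
  obtain ⟨s, t, hs1, hst, ht1, hC₁⟩ := cycle_eq h₁
  obtain ⟨s', t', hs1', hst', ht1', hC₂⟩ := cycle_eq h₂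
  have H : ∀ b, 1 ≤ b → b ≤ n - 1 → cc s t b = cc s' t' b := by
    intro b hb1 hb2
    have := hs 1 b ⟨le_refl 1, by norm_num, hb1, by omega⟩
    rw [hC₁, hC₂, cellCount_cycOf, cellCount_cycOf] at this
    exact this
  obtain ⟨rfl, rfl⟩ := cc_inj hs1 hst ht1 hs1' hst' ht1' H
  rw [hC₁, hC₂]
/-! ### no cycles in thin grids -/

lemma no_cycle_thin {m n : ℤ} (hm : m ≤ 1) {C : Set Edge} (h : IsCycle m n C) : False := by
  classical
  have hform : ∀ e ∈ C, ∃ b, 1 ≤ b ∧ b ≤ n - 1 ∧ e = lE b := by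
    intro e he
    obtain ⟨p, q, rfl, hp, hq, hor⟩ := h.2.1 e he
    obtain ⟨hp1, hp2, hp3, hp4⟩ := hp
    obtain ⟨hq1, hq2, hq3, hq4⟩ := hq
    rcases hor with ⟨h1, h2⟩ | ⟨h1, h2⟩
    · omega
    · refine ⟨p.2, hp3, by omega, ?_⟩
      have hpp : p = (1, p.2) := by ext <;> simp <;> omega
      have hqq : q = (1, p.2 + 1) := by ext <;> simp <;> omega
      rw [hpp, hqq]; rfl
  obtain ⟨e, he⟩ := h.1
  obtain ⟨b0, hb01, hb02, rfl⟩ := hform e he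
  have hfin : {b : ℤ | lE b ∈ C}.Finite := by
    apply (Set.finite_Icc 1 (n-1)).subset
    intro b hb
    obtain ⟨b', h1, h2, h3⟩ := hform _ hb
    rw [lE_inj.mp h3]
    exact Set.mem_Icc.mpr ⟨h1, h2⟩
  have hne : hfin.toFinset.Nonempty := ⟨b0, by simpa [Set.Finite.mem_toFinset] using he⟩
  set t := hfin.toFinset.max' hne with ht
  have htC : lE t ∈ C := by
    have := hfin.toFinset.max'_mem hne
    simpa [Set.Finite.mem_toFinset] using this
  have hdeg : degree C (1, t + 1) = 1 := by
    have hset : {e ∈ C | ((1:ℤ), t + 1) ∈ e} = {lE t} := by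
      ext e
      simp only [Set.mem_setOf_eq, Set.mem_singleton_iff]
      constructor
      · rintro ⟨heC, hmem⟩
        obtain ⟨b, hb1, hb2, rfl⟩ := hform _ heC
        simp only [lE, Sym2.mem_iff, Prod.ext_iff] at hmem
        have hb : b = t + 1 ∨ b = t := by omega
        rcases hb with rfl | rfl
        · exfalso
          have : t + 1 ∈ hfin.toFinset := by simpa [Set.Finite.mem_toFinset] using heC
          have := Finset.le_max' _ _ this
          omega
        · rfl
      · rintro rfl
        exact ⟨htC, by simp [lE, Sym2.mem_iff]⟩
    rw [degree, hset, Set.ncard_singleton]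
  rcases h.2.2.1 (1, t + 1) with hd | hd <;> omega

/-- the `m ≤ 2` case -/
theorem key_le2 {m n : ℤ} (hm : m ≤ 2) {C₁ C₂ : Set Edge} (h₁ : IsCycle m n C₁)
    (h₂ : IsCycle m n C₂) (hs : SameSignature m n C₁ C₂) : C₁ = C₂ := by
  rcases le_or_gt m 1 with hm1 | hm1
  · exact (no_cycle_thin hm1 h₁).elim
  · have hm2 : m = 2 := by omega
    subst hm2
    exact key2 h₁ h₂ hs
/-! ### coordinate swap -/

def swE : Edge → Edge := Sym2.map Prod.swap

lemma swE_pair (p q : V) : swE s(p, q) = s(p.swap, q.swap) := Sym2.map_pair_eq _ _ _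

lemma swE_invol (e : Edge) : swE (swE e) = e := by
  rw [swE, Sym2.map_map]
  have : (Prod.swap ∘ Prod.swap : V → V) = id := funext fun p => Prod.swap_swap p
  rw [this]
  exact congrFun Sym2.map_id e

lemma swE_inj : Function.Injective swE := Function.Involutive.injective swE_invol

lemma mem_swE {p : V} {e : Edge} : p ∈ e ↔ p.swap ∈ swE e := by
  constructor
  · intro hp
    exact Sym2.mem_map.mpr ⟨p, hp, rfl⟩
  · intro hp
    obtain ⟨a, ha, haeq⟩ := Sym2.mem_map.mp hp
    have : a = p := by
      have := congrArg Prod.swap haeq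
      simpa [Prod.swap_swap] using this
    exact this ▸ ha

lemma gridEdge_swap {m n : ℤ} {e : Edge} (h : gridEdge m n e) : gridEdge n m (swE e) := by
  obtain ⟨p, q, rfl, hp, hq, hor⟩ := h
  refine ⟨p.swap, q.swap, swE_pair p q, ?_, ?_, ?_⟩
  · exact ⟨hp.2.2.1, hp.2.2.2, hp.1, hp.2.1⟩
  · exact ⟨hq.2.2.1, hq.2.2.2, hq.1, hq.2.1⟩
  · rcases hor with ⟨h1, h2⟩ | ⟨h1, h2⟩
    · exact Or.inr ⟨h2, h1⟩
    · exact Or.inl ⟨h2, h1⟩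

lemma degree_swap (C : Set Edge) (p : V) : degree (swE '' C) p.swap = degree C p := by
  rw [degree, degree]
  have hset : {e ∈ swE '' C | p.swap ∈ e} = swE '' {e ∈ C | p ∈ e} := by
    ext e
    simp only [Set.mem_setOf_eq, Set.mem_image]
    constructor
    · rintro ⟨⟨e', he', rfl⟩, hm⟩
      exact ⟨e', ⟨he', mem_swE.mpr hm⟩, rfl⟩
    · rintro ⟨e', ⟨he', hm⟩, rfl⟩
      exact ⟨⟨e', he', rfl⟩, mem_swE.mp hm⟩
  rw [hset, Set.ncard_image_of_injective _ swE_inj]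

lemma cellEdges_swap (a b : ℤ) : swE '' cellEdges a b = cellEdges b a := by
  rw [cellEdges, cellEdges, Set.image_insert_eq, Set.image_insert_eq, Set.image_insert_eq,
    Set.image_singleton, swE_pair, swE_pair, swE_pair, swE_pair]
  simp only [Prod.swap_prod_mk]
  ext x
  simp only [Set.mem_insert_iff, Set.mem_singleton_iff]
  tauto

lemma cellCount_swap (C : Set Edge) (a b : ℤ) :
    cellCount (swE '' C) b a = cellCount C a b := by
  rw [cellCount, cellCount, ← cellEdges_swap a b,
    ← Set.image_inter swE_inj, Set.ncard_image_of_injective _ swE_inj]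

lemma isCycle_swap {m n : ℤ} {C : Set Edge} (h : IsCycle m n C) : IsCycle n m (swE '' C) := by
  obtain ⟨hne, hall, hdeg, hconn⟩ := h
  refine ⟨hne.image _, ?_, ?_, ?_⟩
  · rintro e ⟨e', he', rfl⟩
    exact gridEdge_swap (hall _ he')
  · intro p
    have : p = (p.swap).swap := (Prod.swap_swap p).symm
    rw [this, degree_swap]
    exact hdeg p.swap
  · rintro p q ⟨e, ⟨e', he', rfl⟩, hpe⟩ ⟨f, ⟨f', hf', rfl⟩, hqf⟩
    have hp' : p.swap ∈ e' := by
      have := mem_swE.mp hpe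
      rwa [swE_invol] at this
    have hq' : q.swap ∈ f' := by
      have := mem_swE.mp hqf
      rwa [swE_invol] at this
    have hr := hconn p.swap q.swap ⟨e', he', hp'⟩ ⟨f', hf', hq'⟩
    let F : cycleGraph C →g cycleGraph (swE '' C) :=
      { toFun := Prod.swap
        map_rel' := by
          rintro x y ⟨hxy, hm⟩
          refine ⟨fun hc => hxy (by simpa [Prod.ext_iff] using congrArg Prod.swap hc), ?_⟩
          rw [← swE_pair]
          exact ⟨s(x, y), hm, rfl⟩ }
    have := hr.map F
    simpa [F, Prod.swap_swap] using this

lemma sameSig_swap {m n : ℤ} {C₁ C₂ : Set Edge} (hs : SameSignature m n C₁ C₂) :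
    SameSignature n m (swE '' C₁) (swE '' C₂) := by
  intro a b hcell
  rw [cellCount_swap, cellCount_swap]
  exact hs b a ⟨hcell.2.2.1, hcell.2.2.2, hcell.1, hcell.2.1⟩

theorem stmt16 (m n : ℤ) (h : m ≤ 2 ∨ n ≤ 2)
    (C₁ C₂ : Set Edge) (h₁ : IsCycle m n C₁) (h₂ : IsCycle m n C₂)
    (hs : SameSignature m n C₁ C₂) : C₁ = C₂ := by
  rcases h with hm | hn
  · exact key_le2 hm h₁ h₂ hs
  · have himg : swE '' C₁ = swE '' C₂ :=
      key_le2 hn (isCycle_swap h₁) (isCycle_swap h₂) (sameSig_swap hs)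
    have hback : ∀ C : Set Edge, swE '' (swE '' C) = C := by
      intro C
      rw [← Set.image_comp]
      have : swE ∘ swE = id := funext swE_invol
      rw [this, Set.image_id]
    calc C₁ = swE '' (swE '' C₁) := (hback C₁).symm
      _ = swE '' (swE '' C₂) := by rw [himg]
      _ = C₂ := hback C₂
end Slitherlink
end
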